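/- arXiv:2107.02116 — 5 statements merged into one kernel-verified Lean document; each statement's English description precedes it below -/
import Mathlib

section
/- The function μ on positive integers defined by μ(k) = 2·k^(k-2)/(e^k · k!) is a probability measure, i.e. Σ_{k≥1} 2·k^(k-2)/(e^k·k!) = 1. -/
/-!
Write `T x = ∑ₖ kᵏ⁻² / k! · xᵏ`; its radius of convergence is `e⁻¹` and the series still converges
at `e⁻¹` since `kᵏ / k! ≤ eᵏ`. Expanding every `exp (-k t)` in `T (t e⁻ᵗ) = ∑ₖ kᵏ⁻² / k! · tᵏ e⁻ᵏᵗ`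
and regrouping by powers of `t` (legitimate for small `|t|`), the coefficient of `tⁿ` is, up to the
factor `(-1)ⁿ / n!`, the `n`-th finite difference at `0` of `x ↦ xⁿ⁻²`, which vanishes for `n ≥ 3`.
Hence `T (t e⁻ᵗ) = t - t² / 2` near `0`. Both sides are analytic on `(-1/10, 1)`, where `t e⁻ᵗ`
stays inside the disc of convergence, so the identity persists up to `t = 1`, and by continuity of
`t ↦ T (t e⁻ᵗ)` on `[0, 1]` also at `t = 1`: `T (e⁻¹) = 1 / 2`.
-/

open Finset Real Filter Topology Nat

lemma natCast_pow_sub_two_mul_pow {R : Type*} [Semiring R] {k : ℕ} (hk : k ≠ 0) (m : ℕ) :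
    (k : R) ^ (k - 2) * (k : R) ^ m = (k : R) ^ (k + m - 2) := by
  obtain rfl | hk2 : k = 1 ∨ 2 ≤ k := by omega
  · simp
  · rw [← pow_add]; congr 1; omega

lemma sum_range_choose_mul_pow_eq_zero {R : Type*} [CommRing R] {d n : ℕ} (h : d < n) :
    ∑ k ∈ range (n + 1), (-1 : R) ^ (n - k) * n.choose k * (k : R) ^ d = 0 := by
  have := congr_fun (fwdDiff_iter_pow_eq_zero_of_lt (R := R) h) 0
  rw [fwdDiff_iter_eq_sum_shift] at this
  simpa [zsmul_eq_mul] using this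

lemma Summable.tsum_eq_tsum_sum_antidiagonal {α A : Type*} [AddCommMonoid α] [TopologicalSpace α]
    [ContinuousAdd α] [T3Space α] [AddCommMonoid A] [HasAntidiagonal A] {F : A × A → α}
    (hF : Summable F) : ∑' p, F p = ∑' n, ∑ p ∈ antidiagonal n, F p := by
  have hσ := HasAntidiagonal.sigmaAntidiagonalEquivProd.summable_iff.mpr hF
  rw [← HasAntidiagonal.sigmaAntidiagonalEquivProd.tsum_eq F]
  refine (hσ.tsum_sigma' fun n ↦ (hasSum_fintype _).summable).trans ?_
  exact tsum_congr fun n ↦ Finset.tsum_subtype (antidiagonal n) F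

lemma Real.hasSum_pow_div_factorial (x : ℝ) : HasSum (fun n ↦ x ^ n / n !) (exp x) := by
  rw [Real.exp_eq_exp_ℝ]; exact NormedSpace.expSeries_div_hasSum_exp x

-- `k = 0` is excluded by hand: the formula would give `0 ^ 0 / 0 ! = 1`.
noncomputable def cayleyCoeff (k : ℕ) : ℝ := if k = 0 then 0 else (k : ℝ) ^ (k - 2) / k !

lemma cayleyCoeff_zero : cayleyCoeff 0 = 0 := rfl

lemma cayleyCoeff_of_ne_zero {k : ℕ} (hk : k ≠ 0) : cayleyCoeff k = (k : ℝ) ^ (k - 2) / k ! :=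
  if_neg hk

lemma cayleyCoeff_nonneg (k : ℕ) : 0 ≤ cayleyCoeff k := by
  unfold cayleyCoeff; split <;> positivity

lemma cayleyCoeff_mul_sq_le_exp_one_pow (k : ℕ) : cayleyCoeff k * (k : ℝ) ^ 2 ≤ exp 1 ^ k := by
  rcases eq_or_ne k 0 with rfl | hk
  · simp [cayleyCoeff_zero]
  rw [cayleyCoeff_of_ne_zero hk, div_mul_eq_mul_div, natCast_pow_sub_two_mul_pow hk,
    Nat.add_sub_cancel, ← Real.exp_nat_mul, mul_one]
  exact pow_div_factorial_le_exp _ k.cast_nonneg k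

lemma cayleyCoeff_mul_exp_neg_one_pow_le (k : ℕ) :
    cayleyCoeff k * exp (-1) ^ k ≤ 1 / (k : ℝ) ^ 2 := by
  rcases eq_or_ne k 0 with rfl | hk
  · simp [cayleyCoeff_zero]
  rw [le_div_iff₀ (by positivity), mul_right_comm, Real.exp_neg, inv_pow,
    ← div_eq_mul_inv, div_le_one (by positivity)]
  exact cayleyCoeff_mul_sq_le_exp_one_pow k

lemma summable_cayleyCoeff_mul_pow {r : ℝ} (hr₀ : 0 ≤ r) (hr : r ≤ exp (-1)) :
    Summable fun k ↦ cayleyCoeff k * r ^ k := by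
  refine Summable.of_nonneg_of_le (fun k ↦ by have := cayleyCoeff_nonneg k; positivity)
    (fun k ↦ ?_) (Real.summable_one_div_nat_pow.mpr one_lt_two)
  calc cayleyCoeff k * r ^ k ≤ cayleyCoeff k * exp (-1) ^ k := by
        gcongr; exact cayleyCoeff_nonneg k
    _ ≤ 1 / (k : ℝ) ^ 2 := cayleyCoeff_mul_exp_neg_one_pow_le k

noncomputable def cayleyEGF (x : ℝ) : ℝ := ∑' k, cayleyCoeff k * x ^ k

lemma cayleyEGF_eq_ofScalarsSum : cayleyEGF = FormalMultilinearSeries.ofScalarsSum cayleyCoeff :=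
  funext fun x ↦ (FormalMultilinearSeries.ofScalars_sum_eq cayleyCoeff x).symm

lemma ofReal_exp_neg_one_le_radius_ofScalars :
    ENNReal.ofReal (exp (-1)) ≤ (FormalMultilinearSeries.ofScalars ℝ cayleyCoeff).radius := by
  rw [ENNReal.ofReal]
  apply FormalMultilinearSeries.le_radius_of_summable_norm
  simp only [FormalMultilinearSeries.ofScalars_norm, Real.norm_of_nonneg (cayleyCoeff_nonneg _),
    Real.coe_toNNReal _ (exp_pos _).le]
  exact summable_cayleyCoeff_mul_pow (exp_pos _).le le_rfl

lemma analyticAt_cayleyEGF {x : ℝ} (hx : |x| < exp (-1)) : AnalyticAt ℝ cayleyEGF x := by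
  set p := FormalMultilinearSeries.ofScalars ℝ cayleyCoeff
  have hx' : x ∈ Metric.eball (0 : ℝ) p.radius := by
    refine lt_of_lt_of_le ?_ ofReal_exp_neg_one_le_radius_ofScalars
    rwa [edist_zero_right, enorm_eq_ofReal_abs, ENNReal.ofReal_lt_ofReal_iff (exp_pos _)]
  rw [cayleyEGF_eq_ofScalarsSum]
  exact (p.hasFPowerSeriesOnBall (pos_of_gt hx')).analyticAt_of_mem hx'

-- The Taylor coefficients of `t ↦ cayleyEGF (t * exp (-t))`, from expanding each `exp (-k t)`.
noncomputable def cayleyCompCoeff (n : ℕ) : ℝ :=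
  ∑ p ∈ antidiagonal n, cayleyCoeff p.1 * (-(p.1 : ℝ)) ^ p.2 / p.2 !

lemma cayleyCompCoeff_mul_factorial {n : ℕ} (hn : 3 ≤ n) :
    cayleyCompCoeff n * n ! =
      ∑ k ∈ range (n + 1), (-1 : ℝ) ^ (n - k) * n.choose k * (k : ℝ) ^ (n - 2) := by
  rw [cayleyCompCoeff, Nat.sum_antidiagonal_eq_sum_range_succ_mk, sum_mul]
  refine sum_congr rfl fun k hk ↦ ?_
  have hkn : k ≤ n := Nat.lt_succ_iff.mp (mem_range.mp hk)
  rcases eq_or_ne k 0 with rfl | hk0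
  · simp [cayleyCoeff_zero, zero_pow (show n - 2 ≠ 0 by omega)]
  have hpow := natCast_pow_sub_two_mul_pow (R := ℝ) hk0 (n - k)
  rw [show k + (n - k) - 2 = n - 2 by omega] at hpow
  have hfac : (n.choose k : ℝ) * k ! * (n - k)! = n ! := by
    exact_mod_cast Nat.choose_mul_factorial_mul_factorial hkn
  rw [cayleyCoeff_of_ne_zero hk0, neg_pow, ← hfac, ← hpow]
  field_simp

lemma cayleyCompCoeff_eq_zero {n : ℕ} (hn : 3 ≤ n) : cayleyCompCoeff n = 0 := by
  have h := cayleyCompCoeff_mul_factorial hn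
  rw [sum_range_choose_mul_pow_eq_zero (by omega)] at h
  exact (mul_eq_zero.mp h).resolve_right (by positivity)

lemma cayleyCompCoeff_zero : cayleyCompCoeff 0 = 0 := by
  simp [cayleyCompCoeff, cayleyCoeff_zero]

lemma cayleyCompCoeff_one : cayleyCompCoeff 1 = 1 := by
  simp [cayleyCompCoeff, Nat.sum_antidiagonal_eq_sum_range_succ_mk, sum_range_succ, cayleyCoeff]

lemma cayleyCompCoeff_two : cayleyCompCoeff 2 = -1 / 2 := by
  norm_num [cayleyCompCoeff, Nat.sum_antidiagonal_eq_sum_range_succ_mk, sum_range_succ, cayleyCoeff]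

lemma tsum_cayleyCompCoeff_mul_pow (t : ℝ) : ∑' n, cayleyCompCoeff n * t ^ n = t - t ^ 2 / 2 := by
  rw [tsum_eq_sum (s := {1, 2}) fun n hn ↦ ?_]
  · simp [cayleyCompCoeff_one, cayleyCompCoeff_two]; ring
  · simp only [mem_insert, Finset.mem_singleton, not_or] at hn
    obtain rfl | h3 : n = 0 ∨ 3 ≤ n := by omega
    · simp [cayleyCompCoeff_zero]
    · simp [cayleyCompCoeff_eq_zero h3]

noncomputable def cayleyExpTerm (t : ℝ) (p : ℕ × ℕ) : ℝ :=
  cayleyCoeff p.1 * t ^ p.1 * ((-(p.1 : ℝ) * t) ^ p.2 / p.2 !)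

lemma hasSum_cayleyExpTerm_prodMk (t : ℝ) (k : ℕ) :
    HasSum (fun j ↦ cayleyExpTerm t (k, j)) (cayleyCoeff k * (t * exp (-t)) ^ k) := by
  rw [mul_pow, ← Real.exp_nat_mul, ← mul_assoc, mul_neg, ← neg_mul]
  exact (Real.hasSum_pow_div_factorial (-(k : ℝ) * t)).mul_left (cayleyCoeff k * t ^ k)

lemma sum_antidiagonal_cayleyExpTerm (t : ℝ) (n : ℕ) :
    ∑ p ∈ antidiagonal n, cayleyExpTerm t p = cayleyCompCoeff n * t ^ n := by
  rw [cayleyCompCoeff, sum_mul]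
  refine sum_congr rfl fun p hp ↦ ?_
  rw [← mem_antidiagonal.mp hp, cayleyExpTerm, mul_pow, pow_add]; ring

lemma summable_cayleyExpTerm {t : ℝ} (ht : |t| * exp |t| ≤ exp (-1)) :
    Summable (cayleyExpTerm t) := by
  have hnorm (p : ℕ × ℕ) : ‖cayleyExpTerm t p‖ =
      cayleyCoeff p.1 * |t| ^ p.1 * ((p.1 * |t|) ^ p.2 / p.2 !) := by
    simp [cayleyExpTerm, abs_of_nonneg (cayleyCoeff_nonneg _)]
  have hrow (k : ℕ) :
      HasSum (fun j ↦ ‖cayleyExpTerm t (k, j)‖) (cayleyCoeff k * (|t| * exp |t|) ^ k) := by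
    simp only [hnorm]
    rw [mul_pow, ← Real.exp_nat_mul, ← mul_assoc]
    exact (Real.hasSum_pow_div_factorial (k * |t|)).mul_left (cayleyCoeff k * |t| ^ k)
  refine Summable.of_norm ((summable_prod_of_nonneg fun _ ↦ norm_nonneg _).mpr
    ⟨fun k ↦ (hrow k).summable, ?_⟩)
  simp only [fun k ↦ (hrow k).tsum_eq]
  exact summable_cayleyCoeff_mul_pow (by positivity) ht

lemma cayleyEGF_mul_exp_neg {t : ℝ} (ht : |t| * exp |t| ≤ exp (-1)) :
    cayleyEGF (t * exp (-t)) = t - t ^ 2 / 2 := by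
  have hF := summable_cayleyExpTerm ht
  calc cayleyEGF (t * exp (-t)) = ∑' k, ∑' j, cayleyExpTerm t (k, j) :=
        tsum_congr fun k ↦ (hasSum_cayleyExpTerm_prodMk t k).tsum_eq.symm
    _ = ∑' n, cayleyCompCoeff n * t ^ n := by
        rw [← hF.tsum_prod, hF.tsum_eq_tsum_sum_antidiagonal]
        simp only [sum_antidiagonal_cayleyExpTerm]
    _ = t - t ^ 2 / 2 := tsum_cayleyCompCoeff_mul_pow t

lemma abs_mul_exp_abs_lt_exp_neg_one {t : ℝ} (ht : |t| ≤ 1 / 10) : |t| * exp |t| < exp (-1) := by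
  calc |t| * exp |t| ≤ 1 / 10 * exp 1 :=
        mul_le_mul ht (exp_le_exp.2 (by linarith)) (exp_pos _).le (by norm_num)
    _ < exp (-1) := by
        rw [exp_neg, ← one_div, lt_div_iff₀ (exp_pos 1)]
        nlinarith [exp_one_lt_d9, exp_pos 1]

lemma mul_exp_neg_lt_exp_neg_one {t : ℝ} (ht : t ≠ 1) : t * exp (-t) < exp (-1) := by
  have := add_one_lt_exp (sub_ne_zero.2 ht)
  calc t * exp (-t) < exp (t - 1) * exp (-t) := by gcongr; linarith
    _ = exp (-1) := by rw [← exp_add]; ring_nf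

lemma abs_mul_exp_neg_lt_exp_neg_one {t : ℝ} (ht : t ∈ Set.Ioo (-1 / 10) 1) :
    |t * exp (-t)| < exp (-1) := by
  rcases le_or_gt 0 t with h | h
  · rw [abs_of_nonneg (by positivity)]
    exact mul_exp_neg_lt_exp_neg_one ht.2.ne
  · rw [abs_mul, abs_of_pos (exp_pos _), ← abs_of_neg h]
    exact abs_mul_exp_abs_lt_exp_neg_one (by rw [abs_of_neg h]; linarith [ht.1])

lemma eqOn_cayleyEGF_mul_exp_neg :
    Set.EqOn (fun t ↦ cayleyEGF (t * exp (-t))) (fun t ↦ t - t ^ 2 / 2) (Set.Ioo (-1 / 10) 1) := by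
  refine AnalyticOnNhd.eqOn_of_preconnected_of_eventuallyEq (𝕜 := ℝ) (fun t ht ↦ ?_) (fun t _ ↦ ?_)
    isPreconnected_Ioo (by norm_num : (0 : ℝ) ∈ Set.Ioo (-1 / 10) 1) ?_
  · exact (analyticAt_cayleyEGF (abs_mul_exp_neg_lt_exp_neg_one ht)).comp
      (f := fun t ↦ t * exp (-t)) (by fun_prop)
  · fun_prop
  · filter_upwards [Ioo_mem_nhds (by norm_num : (-1 / 10 : ℝ) < 0) (by norm_num : (0 : ℝ) < 1 / 10)]
      with t ht
    exact cayleyEGF_mul_exp_neg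
      (abs_mul_exp_abs_lt_exp_neg_one (abs_le.2 ⟨by linarith [ht.1], ht.2.le⟩)).le

lemma continuousOn_cayleyEGF_mul_exp_neg :
    ContinuousOn (fun t ↦ cayleyEGF (t * exp (-t))) (Set.Ici 0) := by
  refine continuousOn_tsum (fun k ↦ by fun_prop)
    (summable_cayleyCoeff_mul_pow (exp_pos _).le le_rfl) fun k t (ht : 0 ≤ t) ↦ ?_
  rw [norm_of_nonneg (by have := cayleyCoeff_nonneg k; positivity)]
  gcongr
  · exact cayleyCoeff_nonneg k
  · exact mul_exp_neg_le_exp_neg_one t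

lemma cayleyEGF_exp_neg_one : cayleyEGF (exp (-1)) = 1 / 2 := by
  have hIco : Set.EqOn (fun t ↦ cayleyEGF (t * exp (-t))) (fun t ↦ t - t ^ 2 / 2) (Set.Ico 0 1) :=
    eqOn_cayleyEGF_mul_exp_neg.mono (Set.Ico_subset_Ioo_left (by norm_num))
  have h := hIco.of_subset_closure (continuousOn_cayleyEGF_mul_exp_neg.mono Set.Icc_subset_Ici_self)
    (by fun_prop) Set.Ico_subset_Icc_self (by rw [closure_Ico zero_ne_one])
    (Set.right_mem_Icc.2 zero_le_one)
  norm_num at h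
  exact h

/-- `μ(k) = 2·k^(k-2)/(e^k·k!)` is a probability measure on `{1,2,…}`:
`Σ_{k≥1} 2 k^(k-2) e^(-k)/k! = 1`. -/
theorem stmt5 :
    ∑' k : ℕ+, 2 * ((k : ℕ) : ℝ) ^ ((k : ℕ) - 2) /
        (Real.exp 1 ^ (k : ℕ) * (Nat.factorial (k : ℕ) : ℝ)) = 1 := by
  have hterm (k : ℕ+) : 2 * ((k : ℕ) : ℝ) ^ ((k : ℕ) - 2) /
      (Real.exp 1 ^ (k : ℕ) * (Nat.factorial (k : ℕ) : ℝ)) =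
        2 * (cayleyCoeff k * exp (-1) ^ (k : ℕ)) := by
    rw [cayleyCoeff_of_ne_zero k.ne_zero, exp_neg, inv_pow]
    field_simp
  rw [tsum_congr hterm,
    tsum_pnat_eq_tsum_of_eq_zero (f := fun k ↦ 2 * (cayleyCoeff k * exp (-1) ^ k))
      (by simp [cayleyCoeff_zero]),
    tsum_mul_left, ← cayleyEGF, cayleyEGF_exp_neg_one]
  norm_num
end

section
/- For 0 ≤ m ≤ n-1, PF_root(n,m) = (1 - m/n) · PF(n,m), where PF(n,m) counts parking configurations where all m cars park (root possibly occupied) and PF_root(n,m) additionally requires the root to remain empty. -/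
/-!
Fix the sequence of arrivals and count pairs (tree, vertex `r`) in which every car parks and `r`
stays empty. If `r` is the root, add a vertex `u`: hang `r` below `u` and cut off the child of
`r` on the path from `u`, which becomes the new root. Conversely, make the empty vertex `r` the
root, hang the old root below it and remember the old parent of `r` as `u`. Only edges at `r`
change, and no car drives along one of them, since a car reaching the empty vertex `r` parks
there; so the parking outcome is the same. Hence `n · PFroot = (n - m) · PF`, because every
successful parking of `m` cars leaves `n - m` vertices empty.
-/

/-- One driving step following parent pointers. -/
def pstep {n : ℕ} (p : Fin n → Option (Fin n)) (o : Option (Fin n)) : Option (Fin n) :=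
  o.bind p

/-- `p` is (the parent function of) a forest of rooted trees on `{1,…,n}`:
every ancestor chain terminates (no cycles). -/
def IsRootedForest {n : ℕ} (p : Fin n → Option (Fin n)) : Prop :=
  ∀ v : Fin n, (pstep p)^[n] (some v) = none

/-- `p` is (the parent function of) a rooted Cayley tree on `{1,…,n}`. -/
def IsRootedTree {n : ℕ} (p : Fin n → Option (Fin n)) : Prop :=
  IsRootedForest p ∧ ∃! r : Fin n, p r = none

/-- A car arriving at `v` with current occupation `occ` drives towards the root and
parks at the first empty vertex on its way (`none` if it exits through the root).
`fuel` bounds the number of steps; `fuel = n` suffices on a tree with `n` vertices. -/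
def drive {n : ℕ} (p : Fin n → Option (Fin n)) (occ : Finset (Fin n)) :
    ℕ → Fin n → Option (Fin n)
  | 0, _ => none
  | fuel + 1, v => if v ∈ occ then (p v).bind (drive p occ fuel) else some v

/-- Sequentially park the cars of the list `xs`; returns the final occupied set if
every car managed to park, and `none` otherwise. -/
def parkAll {n : ℕ} (p : Fin n → Option (Fin n)) :
    Finset (Fin n) → List (Fin n) → Option (Finset (Fin n))
  | occ, [] => some occ
  | occ, v :: rest =>
      match drive p occ n v with
      | none => none
      | some s => parkAll p (insert s occ) rest

/-- `PF n m`: number of pairs (rooted Cayley tree on `{1,…,n}`, sequence of `m` car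
arrivals) such that all `m` cars manage to park. -/
noncomputable def PF (n m : ℕ) : ℕ :=
  Nat.card {q : (Fin n → Option (Fin n)) × (Fin m → Fin n) //
    IsRootedTree q.1 ∧ (parkAll q.1 ∅ (List.ofFn q.2)).isSome}

/-- `PFroot n m`: number of pairs (rooted Cayley tree on `{1,…,n}`, sequence of `m`
car arrivals) such that all `m` cars park and the root vertex stays empty. -/
noncomputable def PFroot (n m : ℕ) : ℕ :=
  Nat.card {q : (Fin n → Option (Fin n)) × (Fin m → Fin n) //
    IsRootedTree q.1 ∧ ∃ occ : Finset (Fin n),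
      parkAll q.1 ∅ (List.ofFn q.2) = some occ ∧ ∀ r, q.1 r = none → r ∉ occ}

namespace ParkingTree

open Relation

variable {n : ℕ} {p p' : Fin n → Option (Fin n)}

def Step (p : Fin n → Option (Fin n)) (x y : Fin n) : Prop := p x = some y

lemma step_rightUnique : Relator.RightUnique (Step p) :=
  fun _ _ _ h₁ h₂ => Option.some_injective _ (h₁.symm.trans h₂)

lemma iterate_pstep_none (k : ℕ) : (pstep p)^[k] none = none :=
  Function.iterate_fixed rfl k

lemma iterate_pstep_eq_none_of_le {i k : ℕ} {o : Option (Fin n)}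
    (h : (pstep p)^[i] o = none) (hik : i ≤ k) : (pstep p)^[k] o = none := by
  obtain ⟨d, rfl⟩ := Nat.exists_eq_add_of_le hik
  rw [Nat.add_comm, Function.iterate_add_apply, h, iterate_pstep_none]

lemma acc_of_iterate_eq_none :
    ∀ {k : ℕ} {v : Fin n}, (pstep p)^[k] (some v) = none → Acc (flip (Step p)) v
  | 0, _, h => nomatch h
  | k + 1, v, h => .intro v fun y hy => acc_of_iterate_eq_none (k := k) (by
      rwa [Function.iterate_succ_apply, pstep, Option.bind_some, show p v = some y from hy] at h)

lemma reflTransGen_of_iterate_eq_some :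
    ∀ {k : ℕ} {a b : Fin n}, (pstep p)^[k] (some a) = some b → ReflTransGen (Step p) a b
  | 0, _, _, h => by cases h; exact .refl
  | k + 1, a, b, h => by
    rw [Function.iterate_succ_apply, pstep, Option.bind_some] at h
    cases hpa : p a with
    | none => rw [hpa, iterate_pstep_none] at h; cases h
    | some y => rw [hpa] at h; exact .head hpa (reflTransGen_of_iterate_eq_some h)

lemma transGen_of_iterate_succ_eq_some {k : ℕ} {a b : Fin n}
    (h : (pstep p)^[k + 1] (some a) = some b) : TransGen (Step p) a b := by
  rw [Function.iterate_succ_apply, pstep, Option.bind_some] at h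
  cases hpa : p a with
  | none => rw [hpa, iterate_pstep_none] at h; cases h
  | some y => rw [hpa] at h; exact .head' hpa (reflTransGen_of_iterate_eq_some h)

lemma not_transGen_self (hp : WellFounded (flip (Step p)))
    (x : Fin n) : ¬ TransGen (Step p) x x := fun h =>
  hp.transGen.irrefl.irrefl x (transGen_swap.mpr h)

lemma iterate_eq_none_of_wellFounded (hp : WellFounded (flip (Step p))) (v : Fin n) :
    (pstep p)^[n] (some v) = none := by
  by_contra hne
  have hsome : ∀ i ≤ n, ∃ w, (pstep p)^[i] (some v) = some w := fun i hi =>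
    Option.ne_none_iff_exists'.mp fun h => hne (iterate_pstep_eq_none_of_le h hi)
  have hcycle : ∀ i j, i < j → j ≤ n → (pstep p)^[i] (some v) ≠ (pstep p)^[j] (some v) := by
    intro i j hij hj heq
    obtain ⟨w, hw⟩ := hsome i (by omega)
    obtain ⟨k, rfl⟩ := Nat.exists_eq_add_of_lt hij
    rw [show i + k + 1 = (k + 1) + i by omega, Function.iterate_add_apply, hw] at heq
    exact not_transGen_self hp w (transGen_of_iterate_succ_eq_some heq.symm)
  obtain ⟨i, hi, j, hj, hij, heq⟩ := Finset.exists_ne_map_eq_of_card_lt_of_maps_to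
    (s := Finset.range (n + 1)) (t := Finset.univ.map Function.Embedding.some)
    (f := fun i => (pstep p)^[i] (some v)) (by simp) (fun i hi => by
      obtain ⟨w, hw⟩ := hsome i (Finset.mem_range_succ_iff.mp hi)
      simp [hw])
  simp only [Finset.mem_range] at hi hj
  rcases Nat.lt_or_gt_of_ne hij with h | h
  · exact hcycle i j h (by omega) heq
  · exact hcycle j i h (by omega) heq.symm

theorem isRootedForest_iff_wellFounded : IsRootedForest p ↔ WellFounded (flip (Step p)) :=
  ⟨fun hp => ⟨fun v => acc_of_iterate_eq_none (hp v)⟩, iterate_eq_none_of_wellFounded⟩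

lemma _root_.IsRootedTree.eq_none_iff (hp : IsRootedTree p) {r : Fin n}
    (hr : p r = none) {x : Fin n} : p x = none ↔ x = r :=
  ⟨fun hx => hp.2.unique hx hr, fun hx => hx ▸ hr⟩

lemma _root_.IsRootedTree.reflTransGen_root (hp : IsRootedTree p)
    {r : Fin n} (hr : p r = none) (x : Fin n) : ReflTransGen (Step p) x r := by
  induction x using (isRootedForest_iff_wellFounded.mp hp.1).induction with
  | _ x ih =>
    cases hx : p x with
    | none => rw [(hp.eq_none_iff hr).mp hx]
    | some y => exact .head hx (ih y hx)

lemma eq_of_reflTransGen_of_step_eq_none {r y : Fin n}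
    (hr : p r = none) (h : ReflTransGen (Step p) r y) : y = r := by
  rcases h.cases_head with h | ⟨c, hc, -⟩
  · exact h.symm
  · simp [Step, hr] at hc

lemma isRootedTree_of_wellFounded (hp : WellFounded (flip (Step p))) {b : Fin n}
    (hroot : ∀ x, p x = none ↔ x = b) : IsRootedTree p :=
  ⟨isRootedForest_iff_wellFounded.mpr hp, b, (hroot b).mpr rfl, fun y hy => (hroot y).mp hy⟩

def regraft (p : Fin n → Option (Fin n)) (r a b : Fin n) : Fin n → Option (Fin n) :=
  Function.update (Function.update p r (some a)) b none

lemma regraft_of_ne {r a b x : Fin n} (hxr : x ≠ r) (hxb : x ≠ b) : regraft p r a b x = p x := by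
  rw [regraft, Function.update_of_ne hxb, Function.update_of_ne hxr]

lemma acc_regraft {r a b x : Fin n} (hr : p r = none)
    (h : ReflTransGen (Step p) x b) : Acc (flip (Step (regraft p r a b))) x := by
  induction h using ReflTransGen.head_induction_on with
  | refl => exact .intro _ fun y hy => by simp [flip, Step, regraft] at hy
  | @head x y hxy _ ih =>
    by_cases hxb : x = b
    · rw [hxb]; exact .intro _ fun y hy => by simp [flip, Step, regraft] at hy
    have hxr : x ≠ r := by rintro rfl; simp [Step, hr] at hxy
    refine .intro x fun z hz => ?_
    rw [flip, Step, regraft_of_ne hxr hxb, show p x = some y from hxy] at hz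
    exact Option.some_injective _ hz ▸ ih

lemma wellFounded_regraft (hp : WellFounded (flip (Step p)))
    {r a b : Fin n} (hr : p r = none) (hab : ReflTransGen (Step p) a b) :
    WellFounded (flip (Step (regraft p r a b))) := by
  refine ⟨fun x => hp.induction x fun x ih => ?_⟩
  by_cases hxb : x = b
  · exact hxb ▸ acc_regraft hr .refl
  by_cases hxr : x = r
  · refine .intro x fun y hy => ?_
    rw [flip, Step, regraft, Function.update_of_ne hxb, hxr, Function.update_self] at hy
    exact Option.some_injective _ hy ▸ acc_regraft hr hab
  refine .intro x fun y hy => ih y ?_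
  rwa [flip, Step, regraft_of_ne hxr hxb] at hy

lemma regraft_eq_none_iff (hp : IsRootedTree p) {r a b : Fin n} (hr : p r = none) (x : Fin n) :
    regraft p r a b x = none ↔ x = b := by
  by_cases hxb : x = b
  · simp [hxb, regraft]
  by_cases hxr : x = r
  · subst hxr
    rw [regraft, Function.update_of_ne hxb, Function.update_self]
    simp [hxb]
  rw [regraft_of_ne hxr hxb]
  exact ⟨fun h => absurd ((hp.eq_none_iff hr).mp h) hxr, fun h => absurd h hxb⟩

lemma isRootedTree_regraft (hp : IsRootedTree p) {r a b : Fin n}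
    (hr : p r = none) (hab : ReflTransGen (Step p) a b) : IsRootedTree (regraft p r a b) :=
  isRootedTree_of_wellFounded
    (wellFounded_regraft (isRootedForest_iff_wellFounded.mp hp.1) hr hab)
    (regraft_eq_none_iff hp hr)

/-- Makes `v` the root and hangs every former root below `v`. -/
def rerootAt (p : Fin n → Option (Fin n)) (v : Fin n) : Fin n → Option (Fin n) :=
  fun x => if x = v then none else some ((p x).getD v)

lemma rerootAt_eq_none_iff (v x : Fin n) : rerootAt p v x = none ↔ x = v := by
  simp [rerootAt]

lemma rerootAt_of_ne {v x : Fin n} (hxv : x ≠ v) (hx : p x ≠ none) : rerootAt p v x = p x := by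
  obtain ⟨y, hy⟩ := Option.ne_none_iff_exists'.mp hx
  simp [rerootAt, hxv, hy]

lemma wellFounded_rerootAt (hp : WellFounded (flip (Step p)))
    (v : Fin n) : WellFounded (flip (Step (rerootAt p v))) := by
  have hv : Acc (flip (Step (rerootAt p v))) v :=
    .intro v fun y hy => by simp [flip, Step, rerootAt] at hy
  refine ⟨fun x => hp.induction x fun x ih => .intro x fun y hy => ?_⟩
  simp only [flip, Step, rerootAt] at hy
  split_ifs at hy with hxv
  cases hx : p x with
  | none => rw [hx, Option.getD_none, Option.some_inj] at hy; exact hy ▸ hv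
  | some w => rw [hx, Option.getD_some, Option.some_inj] at hy; exact hy ▸ ih w hx

lemma isRootedTree_rerootAt (hp : IsRootedForest p) (v : Fin n) : IsRootedTree (rerootAt p v) :=
  isRootedTree_of_wellFounded (wellFounded_rerootAt (isRootedForest_iff_wellFounded.mp hp) v)
    (rerootAt_eq_none_iff v)

open Classical in
/-- The vertex on the path from `u` whose parent is `r`; it is `r` itself when `u = r`. -/
noncomputable def rootChild (p : Fin n → Option (Fin n)) (r u : Fin n) : Fin n :=
  if h : ∃ w, ReflTransGen (Step p) u w ∧ p w = some r then h.choose else r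

lemma rootChild_eq {r u w : Fin n} (hr : p r = none)
    (huw : ReflTransGen (Step p) u w) (hw : p w = some r) : rootChild p r u = w := by
  have h : ∃ w, ReflTransGen (Step p) u w ∧ p w = some r := ⟨w, huw, hw⟩
  obtain ⟨huz, hz⟩ := h.choose_spec
  have key : ∀ {x y}, p x = some r → p y = some r → ReflTransGen (Step p) x y → y = x := by
    intro x y hx hy hxy
    rcases hxy.cases_head with rfl | ⟨c, hc, hcy⟩
    · rfl
    · cases (Option.some_injective _ (hc.symm.trans hx))
      simp [eq_of_reflTransGen_of_step_eq_none hr hcy, hr] at hy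
  rw [rootChild, dif_pos h]
  rcases ReflTransGen.total_of_right_unique step_rightUnique huz huw with h' | h'
  · exact (key hz hw h').symm
  · exact key hw hz h'

lemma rootChild_self {r : Fin n} (hr : p r = none) : rootChild p r r = r :=
  dif_neg fun ⟨w, hrw, hw⟩ => by simp [eq_of_reflTransGen_of_step_eq_none hr hrw, hr] at hw

lemma rootChild_spec {r u : Fin n} (hr : p r = none) (hur : ReflTransGen (Step p) u r) :
    ReflTransGen (Step p) u (rootChild p r u) ∧
      (rootChild p r u = r ∨ p (rootChild p r u) = some r) ∧ (rootChild p r u = r → u = r) := by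
  rcases hur.cases_tail with rfl | ⟨w, huw, hw⟩
  · rw [rootChild_self hr]
    exact ⟨.refl, .inl rfl, fun _ => rfl⟩
  · rw [rootChild_eq hr huw hw]
    exact ⟨huw, .inr hw, fun hwr => by subst hwr; simp [Step, hr] at hw⟩

lemma rerootAt_regraft (hp : IsRootedTree p) {r a b : Fin n} (hr : p r = none)
    (hb : b = r ∨ p b = some r) : rerootAt (regraft p r a b) r = p := by
  funext x
  by_cases hxr : x = r
  · simp [rerootAt, hxr, hr]
  by_cases hxb : x = b
  · subst hxb
    simp [rerootAt, regraft, hxr, hb.resolve_left hxr]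
  have hx : regraft p r a b x ≠ none := by
    rw [regraft_of_ne hxr hxb]
    exact fun h => hxr ((hp.eq_none_iff hr).mp h)
  rw [rerootAt_of_ne hxr hx, regraft_of_ne hxr hxb]

lemma regraft_apply_getD {r a b : Fin n} (h : b = r → a = r) :
    (regraft p r a b r).getD r = a := by
  by_cases hbr : b = r
  · simp [regraft, hbr, h hbr]
  · simp [regraft, Function.update_of_ne (Ne.symm hbr)]

lemma regraft_rerootAt (hp : IsRootedTree p) {r' : Fin n} (hr' : p r' = none) (r : Fin n) :
    regraft (rerootAt p r) r ((p r).getD r) r' = p := by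
  funext x
  by_cases hxr' : x = r'
  · simp [regraft, hxr', hr']
  have hx : p x ≠ none := fun h => hxr' ((hp.eq_none_iff hr').mp h)
  by_cases hxr : x = r
  · subst hxr
    obtain ⟨y, hy⟩ := Option.ne_none_iff_exists'.mp hx
    simp [regraft, Function.update_of_ne hxr', hy]
  rw [regraft_of_ne hxr hxr', rerootAt_of_ne hxr hx]

lemma reflTransGen_rerootAt {r x t : Fin n}
    (h : ReflTransGen (Step p) x t) (hr : ¬ ReflTransGen (Step p) x r) :
    ReflTransGen (Step (rerootAt p r)) x t := by
  induction h using ReflTransGen.head_induction_on with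
  | refl => exact .refl
  | @head x y hxy hyt ih =>
    have hxr : x ≠ r := by rintro rfl; exact hr .refl
    refine .head ?_ (ih fun hyr => hr (.head hxy hyr))
    rw [Step, rerootAt_of_ne hxr (by simp [show p x = some y from hxy])]
    exact hxy

lemma rootChild_rerootAt (hp : IsRootedTree p) {r' : Fin n} (hr' : p r' = none) (r : Fin n) :
    rootChild (rerootAt p r) r ((p r).getD r) = r' := by
  have hnone : rerootAt p r r = none := (rerootAt_eq_none_iff r r).mpr rfl
  by_cases hrr' : r = r'
  · subst hrr'
    rw [hr', Option.getD_none, rootChild_self hnone]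
  obtain ⟨u, hu⟩ := Option.ne_none_iff_exists'.mp fun h =>
    hrr' ((hp.eq_none_iff hr').mp h)
  rw [hu, Option.getD_some]
  refine rootChild_eq hnone (reflTransGen_rerootAt (hp.reflTransGen_root hr' u) ?_) ?_
  · exact fun hur => not_transGen_self (isRootedForest_iff_wellFounded.mp hp.1) r (.head' hu hur)
  · simp [rerootAt, Ne.symm hrr', hr']

lemma notMem_of_drive_eq_some {occ : Finset (Fin n)} :
    ∀ {fuel : ℕ} {v s : Fin n}, drive p occ fuel v = some s → s ∉ occ
  | 0, _, _, h => nomatch h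
  | fuel + 1, v, s, h => by
    by_cases hv : v ∈ occ
    · rw [drive, if_pos hv] at h
      cases hpv : p v with
      | none => simp [hpv] at h
      | some y => rw [hpv, Option.bind_some] at h; exact notMem_of_drive_eq_some h
    · rw [drive, if_neg hv, Option.some_inj] at h
      exact h ▸ hv

def KeepsEdgesAvoiding (p p' : Fin n → Option (Fin n)) (s : Fin n) : Prop :=
  ∀ x y, p x = some y → x ≠ s → y ≠ s → p' x = some y

lemma drive_congr {s : Fin n} (hpp' : KeepsEdgesAvoiding p p' s) {occ : Finset (Fin n)}
    (hs : s ∉ occ) :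
    ∀ {fuel : ℕ} {x t : Fin n}, drive p occ fuel x = some t → t ≠ s →
      drive p' occ fuel x = some t
  | 0, _, _, h, _ => nomatch h
  | fuel + 1, x, t, h, hts => by
    by_cases hx : x ∈ occ
    · rw [drive, if_pos hx] at h ⊢
      cases hpx : p x with
      | none => simp [hpx] at h
      | some y =>
        rw [hpx, Option.bind_some] at h
        by_cases hys : y = s
        · subst hys
          cases fuel with
          | zero => nomatch h
          | succ fuel =>
            rw [drive, if_neg hs, Option.some_inj] at h
            exact absurd h.symm hts
        · have hxs : x ≠ s := fun h => hs (h ▸ hx)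
          rw [hpp' x y hpx hxs hys, Option.bind_some]
          exact drive_congr hpp' hs h hts
    · rwa [drive, if_neg hx] at h ⊢

lemma parkAll_subset :
    ∀ {l : List (Fin n)} {occ O : Finset (Fin n)}, parkAll p occ l = some O → occ ⊆ O
  | [], _, _, h => (Option.some_inj.mp h).le
  | v :: l, occ, O, h => by
    rw [parkAll] at h
    split at h
    · nomatch h
    · exact (Finset.subset_insert _ _).trans (parkAll_subset h)

lemma card_of_parkAll_eq_some :
    ∀ {l : List (Fin n)} {occ O : Finset (Fin n)}, parkAll p occ l = some O →
      O.card = occ.card + l.length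
  | [], _, _, h => by simp [← Option.some_inj.mp h]
  | v :: l, occ, O, h => by
    rw [parkAll] at h
    split at h
    · nomatch h
    · rename_i s hs
      rw [card_of_parkAll_eq_some h, Finset.card_insert_of_notMem (notMem_of_drive_eq_some hs),
        List.length_cons]
      ring

lemma parkAll_congr {s : Fin n} (hpp' : KeepsEdgesAvoiding p p' s) :
    ∀ {l : List (Fin n)} {occ O : Finset (Fin n)}, s ∉ O → parkAll p occ l = some O →
      parkAll p' occ l = some O
  | [], _, _, _, h => h
  | v :: l, occ, O, hsO, h => by
    rw [parkAll] at h
    split at h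
    · nomatch h
    · rename_i t ht
      have hsub := parkAll_subset h
      have hts : t ≠ s := fun hts => hsO (hsub (by simp [hts]))
      rw [parkAll, drive_congr hpp' (fun hs => hsO (hsub (Finset.mem_insert_of_mem hs))) ht hts]
      exact parkAll_congr hpp' hsO h

def LeavesEmpty (p : Fin n → Option (Fin n)) (l : List (Fin n)) (s : Fin n) : Prop :=
  ∃ O, parkAll p ∅ l = some O ∧ s ∉ O

lemma LeavesEmpty.congr {l : List (Fin n)} {s : Fin n}
    (h : LeavesEmpty p l s) (hpp' : KeepsEdgesAvoiding p p' s) :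
    LeavesEmpty p' l s :=
  let ⟨O, hO, hsO⟩ := h
  ⟨O, parkAll_congr hpp' hsO hO, hsO⟩

lemma keepsEdgesAvoiding_regraft {r a b : Fin n} (hb : b = r ∨ p b = some r) :
    KeepsEdgesAvoiding p (regraft p r a b) r := fun x y hxy hxr hyr => by
  have hxb : x ≠ b := by
    rintro rfl
    rcases hb with rfl | hb
    exacts [hxr rfl, hyr (Option.some_injective _ (hxy.symm.trans hb))]
  rw [regraft_of_ne hxr hxb, hxy]

lemma keepsEdgesAvoiding_rerootAt (r : Fin n) : KeepsEdgesAvoiding p (rerootAt p r) r :=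
  fun x y hxy hxr _ => by rw [rerootAt_of_ne hxr (by simp [hxy]), hxy]

noncomputable def rootEmptyEquiv (l : List (Fin n)) :
    {x : (Fin n → Option (Fin n)) × Fin n × Fin n //
      IsRootedTree x.1 ∧ x.1 x.2.1 = none ∧ LeavesEmpty x.1 l x.2.1} ≃
    {y : (Fin n → Option (Fin n)) × Fin n // IsRootedTree y.1 ∧ LeavesEmpty y.1 l y.2} where
  toFun := fun ⟨(p, r, u), hp, hr, hl⟩ =>
    have hz := rootChild_spec hr (hp.reflTransGen_root hr u)
    ⟨(regraft p r u (rootChild p r u), r), isRootedTree_regraft hp hr hz.1,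
      hl.congr (keepsEdgesAvoiding_regraft hz.2.1)⟩
  invFun := fun ⟨(p, r), hp, hl⟩ =>
    ⟨(rerootAt p r, r, (p r).getD r), isRootedTree_rerootAt hp.1 r,
      (rerootAt_eq_none_iff r r).mpr rfl, hl.congr (keepsEdgesAvoiding_rerootAt r)⟩
  left_inv := fun ⟨(p, r, u), hp, hr, _⟩ => by
    have hz := rootChild_spec hr (hp.reflTransGen_root hr u)
    ext1
    simp only [rerootAt_regraft hp hr hz.2.1, regraft_apply_getD hz.2.2]
  right_inv := fun ⟨(p, r), hp, _⟩ => by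
    obtain ⟨r', hr', -⟩ := hp.2
    ext1
    simp only [rootChild_rerootAt hp hr' r, regraft_rerootAt hp hr' r]

lemma exists_parkAll_root_notMem_iff (hp : IsRootedTree p) {r : Fin n} (hr : p r = none)
    (l : List (Fin n)) :
    (∃ O, parkAll p ∅ l = some O ∧ ∀ r, p r = none → r ∉ O) ↔ LeavesEmpty p l r :=
  ⟨fun ⟨O, hO, hrO⟩ => ⟨O, hO, hrO r hr⟩,
    fun ⟨O, hO, hrO⟩ => ⟨O, hO, fun _ hx => (hp.eq_none_iff hr).mp hx ▸ hrO⟩⟩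

lemma card_rootEmpty (l : List (Fin n)) :
    Nat.card {x : (Fin n → Option (Fin n)) × Fin n × Fin n //
      IsRootedTree x.1 ∧ x.1 x.2.1 = none ∧ LeavesEmpty x.1 l x.2.1} =
    Nat.card {p : Fin n → Option (Fin n) //
      IsRootedTree p ∧ ∃ O, parkAll p ∅ l = some O ∧ ∀ r, p r = none → r ∉ O} * n := by
  let f : {x : (Fin n → Option (Fin n)) × Fin n × Fin n //
      IsRootedTree x.1 ∧ x.1 x.2.1 = none ∧ LeavesEmpty x.1 l x.2.1} →
      {p : Fin n → Option (Fin n) //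
        IsRootedTree p ∧ ∃ O, parkAll p ∅ l = some O ∧ ∀ r, p r = none → r ∉ O} × Fin n :=
    fun x => (⟨x.1.1, x.2.1, (exists_parkAll_root_notMem_iff x.2.1 x.2.2.1 l).mpr x.2.2.2⟩,
      x.1.2.2)
  have hf : Function.Bijective f := by
    constructor
    · rintro ⟨⟨p, r, u⟩, hp, hr, _⟩ ⟨⟨p', r', u'⟩, _, hr', _⟩ heq
      simp only [f, Prod.mk.injEq, Subtype.mk.injEq] at heq
      obtain ⟨rfl, rfl⟩ := heq
      obtain rfl := (hp.eq_none_iff hr').mp hr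
      rfl
    · rintro ⟨⟨p, hp, hl⟩, u⟩
      obtain ⟨r, hr, -⟩ := hp.2
      exact ⟨⟨(p, r, u), hp, hr, (exists_parkAll_root_notMem_iff hp hr l).mp hl⟩, rfl⟩
  rw [Nat.card_eq_of_bijective f hf, Nat.card_prod, Nat.card_fin]

lemma card_leavesEmpty (l : List (Fin n)) :
    Nat.card {y : (Fin n → Option (Fin n)) × Fin n //
      IsRootedTree y.1 ∧ LeavesEmpty y.1 l y.2} =
    Nat.card {p : Fin n → Option (Fin n) //
      IsRootedTree p ∧ (parkAll p ∅ l).isSome} * (n - l.length) := by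
  classical
  have hfiber : ∀ p : Fin n → Option (Fin n),
      Nat.card {r // IsRootedTree p ∧ LeavesEmpty p l r} =
        if IsRootedTree p ∧ (parkAll p ∅ l).isSome then n - l.length else 0 := by
    intro p
    split_ifs with h
    · obtain ⟨O, hO⟩ := Option.isSome_iff_exists.mp h.2
      have hr : ∀ r, (IsRootedTree p ∧ LeavesEmpty p l r) ↔ r ∉ O := fun r => by
        simp [LeavesEmpty, h.1, hO]
      rw [Nat.card_congr (Equiv.subtypeEquivRight hr), Nat.card_eq_fintype_card,
        Fintype.card_subtype_compl, Fintype.card_fin, Fintype.card_coe,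
        card_of_parkAll_eq_some hO, Finset.card_empty, zero_add]
    · have : IsEmpty {r // IsRootedTree p ∧ LeavesEmpty p l r} :=
        ⟨fun ⟨_, hp, _, hO, _⟩ => h ⟨hp, by simp [hO]⟩⟩
      exact Nat.card_of_isEmpty
  rw [Nat.card_congr (Equiv.subtypeProdEquivSigmaSubtype
      fun p r => IsRootedTree p ∧ LeavesEmpty p l r), Nat.card_sigma,
    Finset.sum_congr rfl fun p _ => hfiber p, Finset.sum_ite, Finset.sum_const_zero, add_zero,
    Finset.sum_const, smul_eq_mul, Nat.card_eq_fintype_card, Fintype.card_subtype]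

theorem card_rootEmpty_mul_eq (l : List (Fin n)) :
    Nat.card {p : Fin n → Option (Fin n) //
      IsRootedTree p ∧ ∃ O, parkAll p ∅ l = some O ∧ ∀ r, p r = none → r ∉ O} * n =
    Nat.card {p : Fin n → Option (Fin n) //
      IsRootedTree p ∧ (parkAll p ∅ l).isSome} * (n - l.length) := by
  rw [← card_rootEmpty, ← card_leavesEmpty, Nat.card_congr (rootEmptyEquiv l)]

end ParkingTree

lemma Nat.card_subtype_prod_eq_sum {α β : Type*} [Finite α] [Fintype β] (P : α × β → Prop) :
    Nat.card {q // P q} = ∑ b, Nat.card {a // P (a, b)} := by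
  rw [← Nat.card_sigma]
  exact Nat.card_congr ⟨fun q => ⟨q.1.2, q.1.1, q.2⟩, fun s => ⟨(s.2.1, s.1), s.2.2⟩,
    fun _ => rfl, fun _ => rfl⟩

theorem PFroot_mul_eq (n m : ℕ) : PFroot n m * n = PF n m * (n - m) := by
  rw [PFroot, PF, Nat.card_subtype_prod_eq_sum, Nat.card_subtype_prod_eq_sum, Finset.sum_mul,
    Finset.sum_mul]
  refine Finset.sum_congr rfl fun σ _ => ?_
  have h := ParkingTree.card_rootEmpty_mul_eq (List.ofFn σ)
  rwa [List.length_ofFn] at h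

/-- For `0 ≤ m ≤ n-1`, `PFroot(n,m) = (1 - m/n) · PF(n,m)`. -/
theorem stmt11 (n m : ℕ) (hn : 1 ≤ n) (hm : m ≤ n - 1) :
    (PFroot n m : ℚ) = (1 - (m : ℚ) / n) * (PF n m : ℚ) := by
  have hn0 : (n : ℚ) ≠ 0 := by exact_mod_cast (by omega : n ≠ 0)
  have h := congrArg (Nat.cast (R := ℚ)) (PFroot_mul_eq n m)
  push_cast [Nat.cast_sub (show m ≤ n by omega)] at h
  field_simp
  linarith
end

section
/- The exponential generating function of nearly parked trees satisfies N(x) = x·exp(F(x)), where N(x) = Σ_{n≥1} PF_root(n,n-1)/(n!(n-1)!) · x^n and F(x) = Σ_{n≥1} PF(n,n)/(n!)^2 · x^n. -/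
/-- The EGF of nearly parked trees: `N(x) = Σ_{n≥1} PFroot(n,n-1)/(n!(n-1)!) xⁿ`. -/
noncomputable def Nser : PowerSeries ℚ :=
  PowerSeries.mk fun k =>
    if k = 0 then 0 else
      (PFroot k (k - 1) : ℚ) / ((Nat.factorial k : ℚ) * (Nat.factorial (k - 1) : ℚ))

/-- The EGF of fully parked trees: `F(x) = Σ_{n≥1} PF(n,n)/(n!)² xⁿ`. -/
noncomputable def Fser : PowerSeries ℚ :=
  PowerSeries.mk fun k =>
    if k = 0 then 0 else (PF k k : ℚ) / (Nat.factorial k : ℚ) ^ 2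

/-- `exp(G)` for a power series `G` with zero constant term:
`[xᵏ] exp(G) = Σ_{j=0}^{k} [xᵏ](Gʲ)/j!` (the sum over `j > k` vanishes since `Gʲ`
has order `≥ j`). -/
noncomputable def expComp (G : PowerSeries ℚ) : PowerSeries ℚ :=
  PowerSeries.mk fun k =>
    ∑ j ∈ Finset.range (k + 1), PowerSeries.coeff k (G ^ j) / (Nat.factorial j : ℚ)

/-!
Removing the empty root of a nearly parked tree on `n + 1` vertices leaves a fully parked forest
on `n` vertices, and the root can be any of the `n + 1` vertices; hence `N = X · R` with
`R = Σ FPF(n) / (n!)² xⁿ`, where `FPF(n)` counts fully parked forests.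

In a fully parked forest, a tree and its complement are both closed under taking parents, so
the cars arriving in the tree park in it independently of the others; as all cars park, exactly
`k` of them arrive in a tree with `k` vertices. Marking a vertex and splitting off its tree gives
`n · FPF(n) = Σₖ C(n,k)² · k · PF(k,k) · FPF(n - k)`, that is `R' = F' · R`. The series
`exp(F)` solves the same linear differential equation with the same constant term `1`, so
`R = exp(F)`.
-/

open Finset

theorem Function.iterate_card_sub_one_eq_of_iterate_eq {α : Type*} [Fintype α] {f : α → α}
    {a x : α} (ha : f a = a) {N : ℕ} (hN : f^[N] x = a) :
    f^[Fintype.card α - 1] x = a := by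
  classical
  have hex : ∃ i, f^[i] x = a := ⟨N, hN⟩
  set d := Nat.find hex
  have hd : f^[d] x = a := Nat.find_spec hex
  have hinj : Function.Injective fun i : Fin (d + 1) => f^[i] x := by
    suffices ∀ i j : Fin (d + 1), i < j → f^[i] x ≠ f^[j] x from fun i j hij =>
      (lt_trichotomy i j).elim (fun h => absurd hij (this i j h))
        fun h => h.elim id fun h => absurd hij.symm (this j i h)
    intro i j hij heq
    -- a repetition `i < j` shortcuts the orbit: `a` would be reached after `d - (j - i)` steps
    refine Nat.find_min hex (m := d - j + i) (by omega) ?_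
    rw [Function.iterate_add_apply, heq, ← Function.iterate_add_apply,
      Nat.sub_add_cancel (Nat.le_of_lt_succ j.2), hd]
  have hcard : d + 1 ≤ Fintype.card α := by
    simpa using Fintype.card_le_of_injective _ hinj
  rw [← Nat.sub_add_cancel (show d ≤ Fintype.card α - 1 by omega),
    Function.iterate_add_apply, hd, Function.iterate_fixed ha]

section ParentChain
variable {n : ℕ} {p : Fin n → Option (Fin n)}

@[simp] lemma pstep_none : pstep p none = none := rfl

@[simp] lemma pstep_some (v : Fin n) : pstep p (some v) = p v := rfl

lemma iterate_pstep_none (i : ℕ) : (pstep p)^[i] none = none :=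
  Function.iterate_fixed rfl i

lemma iterate_pstep_succ_some (i : ℕ) (v : Fin n) :
    (pstep p)^[i + 1] (some v) = (pstep p)^[i] (p v) := rfl

lemma iterate_pstep_eq_none_of_le {i j : ℕ} (hij : i ≤ j) {o : Option (Fin n)}
    (hi : (pstep p)^[i] o = none) : (pstep p)^[j] o = none := by
  rw [← Nat.sub_add_cancel hij, Function.iterate_add_apply, hi, iterate_pstep_none]

lemma isRootedForest_of_forall_exists_iterate_eq_none
    (h : ∀ v, ∃ N, (pstep p)^[N] (some v) = none) : IsRootedForest p := fun v => by
  obtain ⟨N, hN⟩ := h v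
  simpa using Function.iterate_card_sub_one_eq_of_iterate_eq (pstep_none (p := p)) hN

end ParentChain

def IsParentClosed {n : ℕ} (p : Fin n → Option (Fin n)) (A : Finset (Fin n)) : Prop :=
  ∀ v ∈ A, ∀ u, p v = some u → u ∈ A

section Drive
variable {n : ℕ} {p : Fin n → Option (Fin n)} {occ : Finset (Fin n)} {f : ℕ} {v : Fin n}

@[simp] lemma drive_zero : drive p occ 0 v = none := rfl

lemma drive_succ_of_notMem (h : v ∉ occ) : drive p occ (f + 1) v = some v := by
  simp [drive, h]

lemma drive_succ_of_mem (h : v ∈ occ) :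
    drive p occ (f + 1) v = (p v).bind (drive p occ f) := by
  simp [drive, h]

lemma notMem_of_drive_eq_some {s : Fin n} (h : drive p occ f v = some s) : s ∉ occ := by
  induction f generalizing v with
  | zero => simp at h
  | succ f ih =>
    by_cases hv : v ∈ occ
    · rw [drive_succ_of_mem hv] at h
      obtain ⟨u, -, hu⟩ := Option.bind_eq_some_iff.1 h
      exact ih hu
    · rw [drive_succ_of_notMem hv, Option.some_inj] at h
      exact h ▸ hv

lemma drive_eq_of_le {g : ℕ} (hf : (pstep p)^[f] (some v) = none) (hfg : f ≤ g) :
    drive p occ g v = drive p occ f v := by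
  induction f generalizing v g with
  | zero => simp at hf
  | succ f ih =>
    obtain ⟨g, rfl⟩ : ∃ g', g = g' + 1 := ⟨g - 1, by omega⟩
    by_cases hv : v ∈ occ
    · rw [drive_succ_of_mem hv, drive_succ_of_mem hv]
      cases hp : p v with
      | none => rfl
      | some u =>
        rw [iterate_pstep_succ_some, hp] at hf
        exact ih hf (by omega)
    · rw [drive_succ_of_notMem hv, drive_succ_of_notMem hv]

lemma IsRootedForest.drive_eq_of_le {g : ℕ} (hp : IsRootedForest p) (hg : n ≤ g) :
    drive p occ g v = drive p occ n v :=
  _root_.drive_eq_of_le (hp v) hg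

lemma IsParentClosed.drive_mem {A : Finset (Fin n)} (hA : IsParentClosed p A) {s : Fin n}
    (hv : v ∈ A) (h : drive p occ f v = some s) : s ∈ A := by
  induction f generalizing v with
  | zero => simp at h
  | succ f ih =>
    by_cases hocc : v ∈ occ
    · rw [drive_succ_of_mem hocc] at h
      obtain ⟨u, hu, hs⟩ := Option.bind_eq_some_iff.1 h
      exact ih (hA v hv u hu) hs
    · rw [drive_succ_of_notMem hocc, Option.some_inj] at h
      exact h ▸ hv

lemma IsParentClosed.drive_congr {A occ' : Finset (Fin n)} (hA : IsParentClosed p A)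
    (hocc : ∀ x ∈ A, x ∈ occ ↔ x ∈ occ') (hv : v ∈ A) :
    drive p occ f v = drive p occ' f v := by
  induction f generalizing v with
  | zero => rfl
  | succ f ih =>
    by_cases h : v ∈ occ
    · rw [drive_succ_of_mem h, drive_succ_of_mem ((hocc v hv).1 h)]
      cases hp : p v with
      | none => rfl
      | some u => exact ih (hA v hv u hp)
    · rw [drive_succ_of_notMem h, drive_succ_of_notMem (mt (hocc v hv).2 h)]

lemma parkAll_cons {l : List (Fin n)} :
    parkAll p occ (v :: l) = (drive p occ n v).bind fun s => parkAll p (insert s occ) l := by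
  cases h : drive p occ n v <;> simp [parkAll, h]

lemma subset_of_parkAll_eq_some {S : Finset (Fin n)} {l : List (Fin n)}
    (h : parkAll p occ l = some S) : occ ⊆ S := by
  induction l generalizing occ with
  | nil => exact (Option.some_inj.1 h).le
  | cons v l ih =>
    rw [parkAll_cons] at h
    obtain ⟨s, -, hS⟩ := Option.bind_eq_some_iff.1 h
    exact (subset_insert s occ).trans (ih hS)

lemma card_of_parkAll_eq_some {S : Finset (Fin n)} {l : List (Fin n)}
    (h : parkAll p occ l = some S) : #S = #occ + l.length := by
  induction l generalizing occ with
  | nil => simp [← Option.some_inj.1 h]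
  | cons v l ih =>
    rw [parkAll_cons] at h
    obtain ⟨s, hs, hS⟩ := Option.bind_eq_some_iff.1 h
    rw [ih hS, card_insert_of_notMem (notMem_of_drive_eq_some hs), List.length_cons]
    omega

lemma IsParentClosed.parkAll_subset {A S : Finset (Fin n)} (hA : IsParentClosed p A)
    {l : List (Fin n)} (hl : ∀ x ∈ l, x ∈ A) (h : parkAll p occ l = some S) :
    S ⊆ occ ∪ A := by
  induction l generalizing occ with
  | nil => simp [← Option.some_inj.1 h]
  | cons v l ih =>
    rw [parkAll_cons] at h
    obtain ⟨s, hs, hS⟩ := Option.bind_eq_some_iff.1 h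
    have hsA : s ∈ A := hA.drive_mem (hl v List.mem_cons_self) hs
    exact (ih (fun x hx => hl x (List.mem_cons_of_mem _ hx)) hS).trans
      (union_subset (insert_subset (mem_union_right _ hsA) subset_union_left) subset_union_right)

end Drive

section Transport
variable {m : ℕ} {q : Fin m → Option (Fin m)}

/-- Cars arriving in `A` never leave it and the other cars never enter it. -/
lemma IsParentClosed.parkAll_isSome_iff {A : Finset (Fin m)} (hA : IsParentClosed q A)
    (hAc : IsParentClosed q Aᶜ) (l : List (Fin m)) {O OA OB : Finset (Fin m)}
    (hOA : ∀ x ∈ A, x ∈ O ↔ x ∈ OA) (hOB : ∀ x ∈ Aᶜ, x ∈ O ↔ x ∈ OB) :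
    (parkAll q O l).isSome ↔
      (parkAll q OA (l.filter (· ∈ A))).isSome ∧ (parkAll q OB (l.filter (· ∉ A))).isSome := by
  induction l generalizing O OA OB with
  | nil => simp [parkAll]
  | cons v l ih =>
    by_cases hv : v ∈ A
    · simp only [List.filter_cons, hv, decide_true, not_true_eq_false, decide_false,
        if_true, Bool.false_eq_true, if_false, parkAll_cons, hA.drive_congr hOA hv]
      cases hd : drive q OA m v with
      | none => simp
      | some s =>
        have hs : s ∈ A := hA.drive_mem hv hd
        refine ih (fun x hx => by simp [hOA x hx]) fun x hx => ?_
        have : x ≠ s := by rintro rfl; exact mem_compl.1 hx hs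
        simp [this, hOB x hx]
    · have hv' : v ∈ Aᶜ := mem_compl.2 hv
      simp only [List.filter_cons, hv, decide_false, Bool.false_eq_true, if_false,
        not_false_eq_true, decide_true, if_true, parkAll_cons, hAc.drive_congr hOB hv']
      cases hd : drive q OB m v with
      | none => simp
      | some s =>
        have hs : s ∈ Aᶜ := hAc.drive_mem hv' hd
        refine ih (fun x hx => ?_) fun x hx => by simp [hOB x hx]
        have : x ≠ s := by rintro rfl; exact mem_compl.1 hs hx
        simp [this, hOA x hx]

variable {k : ℕ} {t : Fin k → Option (Fin k)} {ι : Fin k → Fin m}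

lemma iterate_pstep_map (hι : ∀ w, q (ι w) = (t w).map ι) (i : ℕ) (v : Fin k) :
    (pstep q)^[i] (some (ι v)) = ((pstep t)^[i] (some v)).map ι := by
  induction i generalizing v with
  | zero => rfl
  | succ i ih =>
    rw [iterate_pstep_succ_some, iterate_pstep_succ_some, hι]
    cases t v with
    | none => simp [iterate_pstep_none]
    | some u => exact ih u

lemma IsRootedForest.of_map (hι : ∀ w, q (ι w) = (t w).map ι) (hq : IsRootedForest q) :
    IsRootedForest t :=
  isRootedForest_of_forall_exists_iterate_eq_none fun v =>
    ⟨m, Option.map_eq_none_iff.1 ((iterate_pstep_map hι m v).symm.trans (hq (ι v)))⟩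

lemma drive_map (hι : ∀ w, q (ι w) = (t w).map ι) {occ : Finset (Fin m)}
    {occ' : Finset (Fin k)} (hocc : ∀ w, w ∈ occ' ↔ ι w ∈ occ) (f : ℕ) (v : Fin k) :
    drive q occ f (ι v) = (drive t occ' f v).map ι := by
  induction f generalizing v with
  | zero => rfl
  | succ f ih =>
    by_cases hv : v ∈ occ'
    · rw [drive_succ_of_mem ((hocc v).1 hv), drive_succ_of_mem hv, hι]
      cases t v with
      | none => rfl
      | some u => exact ih u
    · rw [drive_succ_of_notMem (mt (hocc v).2 hv), drive_succ_of_notMem hv]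
      rfl

lemma parkAll_map_isSome_iff (hinj : Function.Injective ι) (hι : ∀ w, q (ι w) = (t w).map ι)
    (ht : IsRootedForest t) (hkm : k ≤ m) (l : List (Fin k)) {occ : Finset (Fin m)}
    {occ' : Finset (Fin k)} (hocc : ∀ w, w ∈ occ' ↔ ι w ∈ occ) :
    (parkAll q occ (l.map ι)).isSome ↔ (parkAll t occ' l).isSome := by
  induction l generalizing occ occ' with
  | nil => simp [parkAll]
  | cons v l ih =>
    rw [List.map_cons, parkAll_cons, parkAll_cons, drive_map hι hocc, ht.drive_eq_of_le hkm]
    cases drive t occ' k v with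
    | none => simp
    | some s => exact ih fun w => by simp [hocc, hinj.eq_iff]

end Transport

section RootRemoval
variable {m : ℕ}

/-- The roots of `t` become the children of the new root `r`. -/
def attachRoot (t : Fin m → Option (Fin m)) (r : Fin (m + 1)) :
    Fin (m + 1) → Option (Fin (m + 1)) :=
  r.insertNth none fun w => some ((t w).elim r r.succAbove)

def removeRoot (p : Fin (m + 1) → Option (Fin (m + 1))) (r : Fin (m + 1)) :
    Fin m → Option (Fin m) :=
  fun w => (p (r.succAbove w)).bind (finSuccEquiv' r)

variable {t : Fin m → Option (Fin m)} {r : Fin (m + 1)}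

@[simp] lemma attachRoot_self : attachRoot t r r = none := by simp [attachRoot]

@[simp] lemma attachRoot_succAbove (w : Fin m) :
    attachRoot t r (r.succAbove w) = some ((t w).elim r r.succAbove) := by
  simp [attachRoot]

lemma attachRoot_eq_none_iff {v : Fin (m + 1)} : attachRoot t r v = none ↔ v = r := by
  refine ⟨fun h => ?_, fun h => h ▸ attachRoot_self⟩
  by_contra hv
  obtain ⟨w, rfl⟩ := Fin.exists_succAbove_eq hv
  simp at h

@[simp] lemma removeRoot_attachRoot : removeRoot (attachRoot t r) r = t := by
  funext w
  cases h : t w <;> simp [removeRoot, h]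

lemma attachRoot_removeRoot {p : Fin (m + 1) → Option (Fin (m + 1))}
    (hr : p r = none) (hne : ∀ v, p v = none → v = r) : attachRoot (removeRoot p r) r = p := by
  funext v
  rcases eq_or_ne v r with rfl | hv
  · rw [attachRoot_self, hr]
  obtain ⟨w, rfl⟩ := Fin.exists_succAbove_eq hv
  obtain ⟨x, hx⟩ := Option.ne_none_iff_exists'.1 fun h => Fin.succAbove_ne r w (hne _ h)
  rw [attachRoot_succAbove, hx]
  rcases eq_or_ne x r with rfl | hxr
  · simp [removeRoot, hx]
  · obtain ⟨u, rfl⟩ := Fin.exists_succAbove_eq hxr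
    simp [removeRoot, hx]

lemma iterate_pstep_attachRoot_of_eq_some {i : ℕ} {v w : Fin m}
    (h : (pstep t)^[i] (some v) = some w) :
    (pstep (attachRoot t r))^[i] (some (r.succAbove v)) = some (r.succAbove w) := by
  induction i generalizing v with
  | zero => simpa using h
  | succ i ih =>
    rw [iterate_pstep_succ_some] at h ⊢
    cases htv : t v with
    | none => rw [htv, iterate_pstep_none] at h; cases h
    | some u => rw [htv] at h; simpa [htv] using ih h

lemma iterate_pstep_attachRoot_of_eq_none {i : ℕ} {v : Fin m}
    (h : (pstep t)^[i] (some v) = none) :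
    (pstep (attachRoot t r))^[i + 1] (some (r.succAbove v)) = none := by
  induction i generalizing v with
  | zero => cases h
  | succ i ih =>
    rw [iterate_pstep_succ_some] at h ⊢
    cases htv : t v with
    | none => simp [htv, iterate_pstep_succ_some, iterate_pstep_none]
    | some u => rw [htv] at h; simpa [htv] using ih h

lemma isRootedForest_attachRoot_iff : IsRootedForest (attachRoot t r) ↔ IsRootedForest t := by
  refine ⟨fun hp v => ?_, fun ht v => ?_⟩
  · cases h : (pstep t)^[m] (some v) with
    | none => rfl
    | some w =>
      have := hp (r.succAbove v)
      rw [Function.iterate_succ_apply', iterate_pstep_attachRoot_of_eq_some h] at this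
      simp at this
  · rcases eq_or_ne v r with rfl | hv
    · exact iterate_pstep_eq_none_of_le (i := 1) (by omega) (by simp)
    · obtain ⟨w, rfl⟩ := Fin.exists_succAbove_eq hv
      exact iterate_pstep_attachRoot_of_eq_none (ht w)

lemma isRootedTree_attachRoot (ht : IsRootedForest t) : IsRootedTree (attachRoot t r) :=
  ⟨isRootedForest_attachRoot_iff.2 ht, r, attachRoot_self, fun _ => attachRoot_eq_none_iff.1⟩

variable {occ : Finset (Fin (m + 1))} {occ' : Finset (Fin m)}

/-- While the root is free, a car that would leave the forest `t` parks at the root. -/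
lemma drive_attachRoot (hr : r ∉ occ) (hocc : ∀ w, w ∈ occ' ↔ r.succAbove w ∈ occ) {f : ℕ}
    {v : Fin m} (hf : (pstep t)^[f] (some v) = none) :
    drive (attachRoot t r) occ (f + 1) (r.succAbove v) =
      some ((drive t occ' f v).elim r r.succAbove) := by
  induction f generalizing v with
  | zero => cases hf
  | succ f ih =>
    by_cases hv : v ∈ occ'
    · rw [drive_succ_of_mem ((hocc v).1 hv), drive_succ_of_mem hv, attachRoot_succAbove]
      rw [iterate_pstep_succ_some] at hf
      cases htv : t v with
      | none => simp [drive_succ_of_notMem hr]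
      | some u => rw [htv] at hf; exact ih hf
    · rw [drive_succ_of_notMem (mt (hocc v).2 hv), drive_succ_of_notMem hv]
      rfl

lemma parkAll_attachRoot_iff (ht : IsRootedForest t) (l : List (Fin m)) (hr : r ∉ occ)
    (hocc : ∀ w, w ∈ occ' ↔ r.succAbove w ∈ occ) :
    (∃ S, parkAll (attachRoot t r) occ (l.map r.succAbove) = some S ∧ r ∉ S) ↔
      (parkAll t occ' l).isSome := by
  induction l generalizing occ occ' with
  | nil => simpa [parkAll] using hr
  | cons v l ih =>
    rw [List.map_cons, parkAll_cons, parkAll_cons, drive_attachRoot hr hocc (ht v),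
      Option.bind_some]
    cases drive t occ' m v with
    | none =>
      simp only [Option.elim_none, Option.bind_none, Option.isSome_none, Bool.false_eq_true,
        iff_false, not_exists, not_and, not_not]
      exact fun S hS => subset_of_parkAll_eq_some hS (mem_insert_self r occ)
    | some s =>
      refine ih (by simp [hr, (Fin.succAbove_ne r s).symm]) fun w => ?_
      simp [hocc, Fin.succAbove_right_injective.eq_iff]

/-- A car reaching a vertex that is still free parks there. -/
lemma forall_mem_ne_of_parkAll_eq_some {n : ℕ} {p : Fin n → Option (Fin n)}
    {occ S : Finset (Fin n)} {l : List (Fin n)} (h : parkAll p occ l = some S) {x : Fin n}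
    (hx : x ∉ S) : ∀ v ∈ l, v ≠ x := by
  induction l generalizing occ with
  | nil => simp
  | cons v l ih =>
    rw [parkAll_cons] at h
    obtain ⟨s, hs, hS⟩ := Option.bind_eq_some_iff.1 h
    have hxocc : x ∉ insert s occ := fun hmem => hx (subset_of_parkAll_eq_some hS hmem)
    refine List.forall_mem_cons.2 ⟨?_, ih hS⟩
    rintro rfl
    obtain ⟨n, rfl⟩ : ∃ n', n = n' + 1 := ⟨n - 1, by have := v.pos; omega⟩
    rw [drive_succ_of_notMem fun h => hxocc (mem_insert_of_mem h), Option.some_inj] at hs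
    exact hxocc (hs ▸ mem_insert_self _ _)

end RootRemoval

def ParkedForest (m : ℕ) : Type :=
  {qb : (Fin m → Option (Fin m)) × (Fin m → Fin m) //
    IsRootedForest qb.1 ∧ (parkAll qb.1 ∅ (List.ofFn qb.2)).isSome}

instance (m : ℕ) : Finite (ParkedForest m) := by unfold ParkedForest; infer_instance

def NearlyParkedTree (n m : ℕ) : Type :=
  {q : (Fin n → Option (Fin n)) × (Fin m → Fin n) //
    IsRootedTree q.1 ∧ ∃ occ : Finset (Fin n),
      parkAll q.1 ∅ (List.ofFn q.2) = some occ ∧ ∀ r, q.1 r = none → r ∉ occ}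

section NearlyParked
variable {m : ℕ}

def attachRootParked (x : Fin (m + 1) × ParkedForest m) : NearlyParkedTree (m + 1) m :=
  ⟨(attachRoot x.2.1.1 x.1, x.1.succAbove ∘ x.2.1.2), isRootedTree_attachRoot x.2.2.1, by
    obtain ⟨S, hS, hrS⟩ := (parkAll_attachRoot_iff x.2.2.1 (List.ofFn x.2.1.2)
      (notMem_empty x.1) (by simp)).2 x.2.2.2
    refine ⟨S, by rwa [List.map_ofFn] at hS, fun z hz => ?_⟩
    rwa [attachRoot_eq_none_iff.1 hz]⟩

lemma attachRootParked_bijective : Function.Bijective (attachRootParked (m := m)) := by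
  constructor
  · rintro ⟨r, ⟨⟨t, b⟩, _⟩⟩ ⟨r', ⟨⟨t', b'⟩, _⟩⟩ hrt
    have hp : attachRoot t r = attachRoot t' r' := congrArg (fun x => x.1.1) hrt
    have hb : r.succAbove ∘ b = r'.succAbove ∘ b' := congrArg (fun x => x.1.2) hrt
    obtain rfl : r = r' := attachRoot_eq_none_iff.1 (hp ▸ attachRoot_self)
    obtain rfl : t = t' := by
      rw [← removeRoot_attachRoot (t := t) (r := r), hp, removeRoot_attachRoot]
    obtain rfl : b = b' := Fin.succAbove_right_injective.comp_left hb
    rfl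
  · rintro ⟨⟨p, a⟩, ⟨hp, r, hr, hru⟩, S, hS, hroot⟩
    have hrS : r ∉ S := hroot r hr
    have hcars : ∀ i, ∃ w, r.succAbove w = a i := fun i =>
      Fin.exists_succAbove_eq <|
        forall_mem_ne_of_parkAll_eq_some hS hrS _ (List.mem_ofFn.2 ⟨i, rfl⟩)
    choose b hb using hcars
    have hpr : attachRoot (removeRoot p r) r = p := attachRoot_removeRoot hr hru
    have ht : IsRootedForest (removeRoot p r) := isRootedForest_attachRoot_iff.1 (hpr ▸ hp)
    have hab : r.succAbove ∘ b = a := funext hb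
    refine ⟨(r, ⟨(removeRoot p r, b), ht, ?_⟩), ?_⟩
    · refine (parkAll_attachRoot_iff ht (List.ofFn b) (notMem_empty r) (by simp)).1 ⟨S, ?_, hrS⟩
      rwa [List.map_ofFn, hab, hpr]
    · exact Subtype.ext (Prod.ext hpr hab)

lemma PFroot_succ (m : ℕ) : PFroot (m + 1) m = (m + 1) * Nat.card (ParkedForest m) := by
  change Nat.card (NearlyParkedTree (m + 1) m) = _
  rw [← Nat.card_eq_of_bijective _ attachRootParked_bijective, Nat.card_prod,
    Nat.card_eq_fintype_card, Fintype.card_fin]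

end NearlyParked

section Components
variable {M : ℕ} {q : Fin M → Option (Fin M)}

def stepUp (q : Fin M → Option (Fin M)) (v : Fin M) : Fin M := (q v).getD v

def rootOf (q : Fin M → Option (Fin M)) (v : Fin M) : Fin M := (stepUp q)^[M] v

def compOf (q : Fin M → Option (Fin M)) (v : Fin M) : Finset (Fin M) :=
  {w | rootOf q w = rootOf q v}

lemma stepUp_of_eq_none {v : Fin M} (h : q v = none) : stepUp q v = v := by
  simp [stepUp, h]

lemma stepUp_of_eq_some {v u : Fin M} (h : q v = some u) : stepUp q v = u := by
  simp [stepUp, h]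

lemma parent_iterate_stepUp_eq_none {f : ℕ} {v : Fin M}
    (hf : (pstep q)^[f] (some v) = none) : q ((stepUp q)^[f] v) = none := by
  induction f generalizing v with
  | zero => cases hf
  | succ f ih =>
    rw [iterate_pstep_succ_some] at hf
    cases hv : q v with
    | none => rwa [Function.iterate_fixed (stepUp_of_eq_none hv)]
    | some u => rw [hv] at hf; rw [Function.iterate_succ_apply, stepUp_of_eq_some hv]; exact ih hf

lemma rootOf_of_eq_none {v : Fin M} (h : q v = none) : rootOf q v = v :=
  Function.iterate_fixed (stepUp_of_eq_none h) M

lemma iterate_stepUp_eq_of_le {f g : ℕ} {v : Fin M} (hf : (pstep q)^[f] (some v) = none)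
    (hfg : f ≤ g) : (stepUp q)^[g] v = (stepUp q)^[f] v := by
  rw [← Nat.sub_add_cancel hfg, Function.iterate_add_apply,
    Function.iterate_fixed (stepUp_of_eq_none (parent_iterate_stepUp_eq_none hf))]

namespace IsRootedForest

lemma parent_rootOf (hq : IsRootedForest q) (v : Fin M) : q (rootOf q v) = none :=
  parent_iterate_stepUp_eq_none (hq v)

lemma rootOf_stepUp (hq : IsRootedForest q) (v : Fin M) :
    rootOf q (stepUp q v) = rootOf q v := by
  have : rootOf q (stepUp q v) = stepUp q (rootOf q v) := by
    rw [rootOf, rootOf, ← Function.iterate_succ_apply, Function.iterate_succ_apply']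
  rw [this, stepUp_of_eq_none (hq.parent_rootOf v)]

lemma rootOf_eq_of_parent_eq_some (hq : IsRootedForest q) {v u : Fin M} (h : q v = some u) :
    rootOf q v = rootOf q u := by
  rw [← hq.rootOf_stepUp v, stepUp_of_eq_some h]

lemma isParentClosed_compOf (hq : IsRootedForest q) (v : Fin M) :
    IsParentClosed q (compOf q v) := by
  intro w hw u hu
  simpa [compOf, hq.rootOf_eq_of_parent_eq_some hu] using hw

lemma isParentClosed_compl_compOf (hq : IsRootedForest q) (v : Fin M) :
    IsParentClosed q (compOf q v)ᶜ := by
  intro w hw u hu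
  simpa [compOf, hq.rootOf_eq_of_parent_eq_some hu] using hw

end IsRootedForest

lemma mem_compOf {v w : Fin M} : w ∈ compOf q v ↔ rootOf q w = rootOf q v := by
  simp [compOf]

lemma self_mem_compOf (v : Fin M) : v ∈ compOf q v := mem_compOf.2 rfl

lemma compOf_eq_of_mem {v w : Fin M} (h : w ∈ compOf q v) : compOf q w = compOf q v := by
  ext x; simp [mem_compOf.1 h, mem_compOf]

lemma rootOf_map {K : ℕ} {t : Fin K → Option (Fin K)} {ι : Fin K → Fin M}
    (hι : ∀ w, q (ι w) = (t w).map ι) (ht : IsRootedForest t) (hKM : K ≤ M) (w : Fin K) :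
    rootOf q (ι w) = ι (rootOf t w) := by
  have hsemi : Function.Semiconj ι (stepUp t) (stepUp q) := fun w => by
    cases htw : t w <;> simp [stepUp, hι, htw]
  rw [rootOf, rootOf, ← hsemi.iterate_right M w, iterate_stepUp_eq_of_le (ht w) hKM]

end Components

lemma List.filter_ofFn_eq_ofFn_comp {α : Type*} {M k : ℕ} (b : Fin M → α) (P : α → Bool)
    {ι : Fin k → Fin M} (hι : StrictMono ι) (h : ∀ pos, P (b pos) ↔ pos ∈ Set.range ι) :
    (List.ofFn b).filter P = List.ofFn (b ∘ ι) := by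
  rw [List.ofFn_eq_map, List.filter_map, ← List.map_ofFn]
  congr 1
  refine List.SortedLT.eq_of_mem_iff ((List.sortedLT_finRange M).pairwise.filter _).sortedLT
    hι.sortedLT_ofFn fun pos => ?_
  simp [h, List.mem_ofFn']

section Glue
variable {m k l : ℕ} (e : Fin k ⊕ Fin l ≃ Fin m)

def glueForest (t : Fin k → Option (Fin k)) (t' : Fin l → Option (Fin l)) :
    Fin m → Option (Fin m) :=
  fun x => Sum.elim (fun i => (t i).map (e ∘ .inl)) (fun j => (t' j).map (e ∘ .inr)) (e.symm x)

def restrictLeft (q : Fin m → Option (Fin m)) (i : Fin k) : Option (Fin k) :=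
  (q (e (.inl i))).bind fun x => (e.symm x).getLeft?

def restrictRight (q : Fin m → Option (Fin m)) (j : Fin l) : Option (Fin l) :=
  (q (e (.inr j))).bind fun x => (e.symm x).getRight?

def glueCars {k' l' : ℕ} (f : Fin k' ⊕ Fin l' ≃ Fin m) (c : Fin k' → Fin k)
    (c' : Fin l' → Fin l) : Fin m → Fin m :=
  e ∘ Sum.map c c' ∘ f.symm

variable {e} {t : Fin k → Option (Fin k)} {t' : Fin l → Option (Fin l)}

@[simp] lemma glueForest_inl (i : Fin k) :
    glueForest e t t' (e (.inl i)) = (t i).map (e ∘ .inl) := by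
  simp [glueForest]

@[simp] lemma glueForest_inr (j : Fin l) :
    glueForest e t t' (e (.inr j)) = (t' j).map (e ∘ .inr) := by
  simp [glueForest]

@[simp] lemma restrictLeft_glueForest : restrictLeft e (glueForest e t t') = t := by
  funext i; cases h : t i <;> simp [restrictLeft, h]

@[simp] lemma restrictRight_glueForest : restrictRight e (glueForest e t t') = t' := by
  funext j; cases h : t' j <;> simp [restrictRight, h]

lemma le_of_sum_equiv_fin (e : Fin k ⊕ Fin l ≃ Fin m) : k ≤ m ∧ l ≤ m := by
  have := Fintype.card_congr e
  simp only [Fintype.card_sum, Fintype.card_fin] at this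
  omega

lemma IsRootedForest.glueForest (ht : IsRootedForest t) (ht' : IsRootedForest t') :
    IsRootedForest (glueForest e t t') := by
  intro x
  obtain ⟨y, rfl⟩ := e.surjective x
  cases y with
  | inl i =>
    rw [iterate_pstep_map (t := t) glueForest_inl,
      iterate_pstep_eq_none_of_le (le_of_sum_equiv_fin e).1 (ht i), Option.map_none]
  | inr j =>
    rw [iterate_pstep_map (t := t') glueForest_inr,
      iterate_pstep_eq_none_of_le (le_of_sum_equiv_fin e).2 (ht' j), Option.map_none]

end Glue

section SplitEquiv

lemma card_compl_of_card_eq {m k : ℕ} {A : Finset (Fin m)} (hA : #A = k) : #Aᶜ = m - k := by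
  rw [card_compl, hA, Fintype.card_fin]

variable {m k : ℕ} (A : Finset (Fin m)) (hA : #A = k)

/-- Enumerates `A` and `Aᶜ` increasingly, so that relabelling the cars along it keeps their
order of arrival. -/
def splitEquiv : Fin k ⊕ Fin (m - k) ≃ Fin m :=
  (Equiv.sumCongr (A.orderIsoOfFin hA).toEquiv
    ((Aᶜ.orderIsoOfFin (card_compl_of_card_eq hA)).toEquiv.trans
      (Equiv.subtypeEquivRight fun _ => mem_compl))).trans (Equiv.sumCompl (· ∈ A))

variable {A hA}

lemma strictMono_splitEquiv_inl : StrictMono (splitEquiv A hA ∘ .inl) :=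
  (A.orderEmbOfFin hA).strictMono

lemma strictMono_splitEquiv_inr : StrictMono (splitEquiv A hA ∘ .inr) :=
  (Aᶜ.orderEmbOfFin (card_compl_of_card_eq hA)).strictMono

@[simp] lemma splitEquiv_inl_mem (i : Fin k) : splitEquiv A hA (.inl i) ∈ A :=
  A.orderEmbOfFin_mem hA i

@[simp] lemma splitEquiv_inr_notMem (j : Fin (m - k)) : splitEquiv A hA (.inr j) ∉ A :=
  mem_compl.1 (Aᶜ.orderEmbOfFin_mem (card_compl_of_card_eq hA) j)

lemma mem_iff_mem_range_splitEquiv_inl {x : Fin m} :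
    x ∈ A ↔ x ∈ Set.range (splitEquiv A hA ∘ .inl) := by
  obtain ⟨y | y, rfl⟩ := (splitEquiv A hA).surjective x <;> simp

lemma notMem_iff_mem_range_splitEquiv_inr {x : Fin m} :
    x ∉ A ↔ x ∈ Set.range (splitEquiv A hA ∘ .inr) := by
  obtain ⟨y | y, rfl⟩ := (splitEquiv A hA).surjective x <;> simp

variable {q : Fin m → Option (Fin m)}

lemma IsParentClosed.map_restrictLeft (hq : IsParentClosed q A) (i : Fin k) :
    (restrictLeft (splitEquiv A hA) q i).map (splitEquiv A hA ∘ .inl) =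
      q (splitEquiv A hA (.inl i)) := by
  cases hx : q (splitEquiv A hA (.inl i)) with
  | none => simp [restrictLeft, hx]
  | some x =>
    obtain ⟨i', rfl⟩ := (mem_iff_mem_range_splitEquiv_inl (hA := hA)).1 (hq _ (by simp) x hx)
    simp [restrictLeft, hx]

lemma IsParentClosed.map_restrictRight (hq : IsParentClosed q Aᶜ) (j : Fin (m - k)) :
    (restrictRight (splitEquiv A hA) q j).map (splitEquiv A hA ∘ .inr) =
      q (splitEquiv A hA (.inr j)) := by
  cases hx : q (splitEquiv A hA (.inr j)) with
  | none => simp [restrictRight, hx]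
  | some x =>
    obtain ⟨j', rfl⟩ :=
      (notMem_iff_mem_range_splitEquiv_inr (hA := hA)).1 (mem_compl.1 (hq _ (by simp) x hx))
    simp [restrictRight, hx]

lemma glueForest_restrict (hq : IsParentClosed q A) (hq' : IsParentClosed q Aᶜ) :
    glueForest (splitEquiv A hA) (restrictLeft (splitEquiv A hA) q)
      (restrictRight (splitEquiv A hA) q) = q := by
  funext x
  obtain ⟨y | y, rfl⟩ := (splitEquiv A hA).surjective x
  · rw [glueForest_inl, hq.map_restrictLeft]
  · rw [glueForest_inr, hq'.map_restrictRight]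

variable {t : Fin k → Option (Fin k)} {t' : Fin (m - k) → Option (Fin (m - k))}

lemma isParentClosed_glueForest : IsParentClosed (glueForest (splitEquiv A hA) t t') A := by
  intro x hx u hu
  obtain ⟨i, rfl⟩ := (mem_iff_mem_range_splitEquiv_inl (hA := hA)).1 hx
  obtain ⟨i', -, rfl⟩ := Option.map_eq_some_iff.1 ((glueForest_inl i).symm.trans hu)
  simp

lemma isParentClosed_compl_glueForest :
    IsParentClosed (glueForest (splitEquiv A hA) t t') Aᶜ := by
  intro x hx u hu
  obtain ⟨j, rfl⟩ := (notMem_iff_mem_range_splitEquiv_inr (hA := hA)).1 (mem_compl.1 hx)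
  obtain ⟨j', -, rfl⟩ := Option.map_eq_some_iff.1 ((glueForest_inr j).symm.trans hu)
  simp

lemma compOf_glueForest (ht : IsRootedTree t) (ht' : IsRootedForest t') (i : Fin k) :
    compOf (glueForest (splitEquiv A hA) t t') (splitEquiv A hA (.inl i)) = A := by
  obtain ⟨htf, r, -, hr⟩ := ht
  have hle := le_of_sum_equiv_fin (splitEquiv A hA)
  have hroot : ∀ i', rootOf (glueForest (splitEquiv A hA) t t') (splitEquiv A hA (.inl i')) =
      splitEquiv A hA (.inl r) := fun i' => by
    rw [← hr _ (htf.parent_rootOf i')]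
    exact rootOf_map (ι := splitEquiv A hA ∘ .inl) glueForest_inl htf hle.1 i'
  have hroot' : ∀ j, rootOf (glueForest (splitEquiv A hA) t t') (splitEquiv A hA (.inr j)) =
      splitEquiv A hA (.inr (rootOf t' j)) :=
    rootOf_map (ι := splitEquiv A hA ∘ .inr) glueForest_inr ht' hle.2
  ext x
  obtain ⟨y | j, rfl⟩ := (splitEquiv A hA).surjective x <;> simp [mem_compOf, hroot, hroot']

lemma IsRootedForest.isRootedTree_restrictLeft (hq : IsRootedForest q) {v : Fin m}
    (hv : compOf q v = A) : IsRootedTree (restrictLeft (splitEquiv A hA) q) := by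
  have hcomm := fun i => ((hv ▸ hq.isParentClosed_compOf v).map_restrictLeft (hA := hA) i).symm
  have hroot : rootOf q v ∈ A := hv ▸ mem_compOf.2 (rootOf_of_eq_none (hq.parent_rootOf v))
  obtain ⟨r, hr⟩ := (mem_iff_mem_range_splitEquiv_inl (hA := hA)).1 hroot
  refine ⟨hq.of_map hcomm, r, ?_, fun i hi => ?_⟩
  · have h := hcomm r
    rw [show splitEquiv A hA (.inl r) = rootOf q v from hr, hq.parent_rootOf] at h
    exact Option.map_eq_none_iff.1 h.symm
  · have hi' : q (splitEquiv A hA (.inl i)) = none := by simpa [hi] using hcomm i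
    have hmem : splitEquiv A hA (.inl i) ∈ compOf q v := hv ▸ splitEquiv_inl_mem i
    rw [mem_compOf, rootOf_of_eq_none hi', ← hr] at hmem
    exact Sum.inl_injective ((splitEquiv A hA).injective hmem)

end SplitEquiv

lemma List.length_filter_ofFn {α : Type*} {M : ℕ} (b : Fin M → α) (P : α → Prop)
    [DecidablePred P] : ((List.ofFn b).filter (P ·)).length = #{pos | P (b pos)} := by
  rw [List.ofFn_eq_map, List.filter_map, List.length_map, Fin.univ_def]
  rfl

section GlueParking
variable {m k : ℕ} {A C : Finset (Fin m)} {hA : #A = k} {hC : #C = k}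
  {t : Fin k → Option (Fin k)} {t' : Fin (m - k) → Option (Fin (m - k))}
  {c : Fin k → Fin k} {c' : Fin (m - k) → Fin (m - k)}

lemma glueCars_mem_iff (pos : Fin m) :
    glueCars (splitEquiv A hA) (splitEquiv C hC) c c' pos ∈ A ↔ pos ∈ C := by
  obtain ⟨y | y, rfl⟩ := (splitEquiv C hC).surjective pos <;> simp [glueCars]

lemma parkAll_glue_isSome_iff (ht : IsRootedForest t) (ht' : IsRootedForest t') :
    (parkAll (glueForest (splitEquiv A hA) t t') ∅
        (List.ofFn (glueCars (splitEquiv A hA) (splitEquiv C hC) c c'))).isSome ↔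
      (parkAll t ∅ (List.ofFn c)).isSome ∧ (parkAll t' ∅ (List.ofFn c')).isSome := by
  have hle := le_of_sum_equiv_fin (splitEquiv A hA)
  have hinj := (splitEquiv A hA).injective
  rw [isParentClosed_glueForest.parkAll_isSome_iff isParentClosed_compl_glueForest _
    (fun _ _ => Iff.rfl) fun _ _ => Iff.rfl]
  rw [List.filter_ofFn_eq_ofFn_comp _ _ strictMono_splitEquiv_inl fun pos => by
      simpa [glueCars_mem_iff] using mem_iff_mem_range_splitEquiv_inl (hA := hC),
    List.filter_ofFn_eq_ofFn_comp _ _ strictMono_splitEquiv_inr fun pos => by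
      simpa [glueCars_mem_iff] using notMem_iff_mem_range_splitEquiv_inr (hA := hC)]
  have hL : List.ofFn (glueCars (splitEquiv A hA) (splitEquiv C hC) c c' ∘
      splitEquiv C hC ∘ .inl) = (List.ofFn c).map (splitEquiv A hA ∘ .inl) := by
    rw [List.map_ofFn]; congr 1; funext j; simp [glueCars]
  have hR : List.ofFn (glueCars (splitEquiv A hA) (splitEquiv C hC) c c' ∘
      splitEquiv C hC ∘ .inr) = (List.ofFn c').map (splitEquiv A hA ∘ .inr) := by
    rw [List.map_ofFn]; congr 1; funext j; simp [glueCars]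
  rw [hL, hR, parkAll_map_isSome_iff (hinj.comp Sum.inl_injective) glueForest_inl ht hle.1 _
      (occ' := ∅) (by simp), parkAll_map_isSome_iff (hinj.comp Sum.inr_injective)
      glueForest_inr ht' hle.2 _ (occ' := ∅) (by simp)]

end GlueParking

def carsArrivingIn {m : ℕ} (b : Fin m → Fin m) (A : Finset (Fin m)) : Finset (Fin m) :=
  {pos | b pos ∈ A}

/-- Cars arriving in `A` park inside `A`. -/
lemma IsParentClosed.card_carsArrivingIn_le {m : ℕ} {q : Fin m → Option (Fin m)}
    {A : Finset (Fin m)} (hA : IsParentClosed q A) (hAc : IsParentClosed q Aᶜ)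
    {b : Fin m → Fin m} (hb : (parkAll q ∅ (List.ofFn b)).isSome) :
    #(carsArrivingIn b A) ≤ #A := by
  obtain ⟨S, hS⟩ := Option.isSome_iff_exists.1
    ((hA.parkAll_isSome_iff hAc _ (fun _ _ => Iff.rfl) fun _ _ => Iff.rfl).1 hb).1
  have hSA : S ⊆ A := by
    simpa using hA.parkAll_subset (by simp [List.mem_filter]) hS
  have := card_of_parkAll_eq_some hS
  rw [card_empty, zero_add, List.length_filter_ofFn b (· ∈ A)] at this
  exact this ▸ card_le_card hSA

lemma IsRootedForest.card_carsArrivingIn_compOf {m : ℕ} {q : Fin m → Option (Fin m)}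
    (hq : IsRootedForest q) {b : Fin m → Fin m} (hb : (parkAll q ∅ (List.ofFn b)).isSome)
    (v : Fin m) : #(carsArrivingIn b (compOf q v)) = #(compOf q v) := by
  have h := (hq.isParentClosed_compOf v).card_carsArrivingIn_le
    (hq.isParentClosed_compl_compOf v) hb
  have h' := (hq.isParentClosed_compl_compOf v).card_carsArrivingIn_le
    (by simpa using hq.isParentClosed_compOf v) hb
  have hsum := card_filter_add_card_filter_not (s := univ) (fun pos => b pos ∈ compOf q v)
  simp only [carsArrivingIn, mem_compl, card_compl, card_univ, Fintype.card_fin] at h h' hsum ⊢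
  have := card_le_univ (compOf q v)
  simp only [Fintype.card_fin] at this
  omega

def ParkedTree (k : ℕ) : Type :=
  {qb : (Fin k → Option (Fin k)) × (Fin k → Fin k) //
    IsRootedTree qb.1 ∧ (parkAll qb.1 ∅ (List.ofFn qb.2)).isSome}

instance (k : ℕ) : Finite (ParkedTree k) := by unfold ParkedTree; infer_instance

section ComponentSplit
variable {m k : ℕ} (A C : Finset (Fin m)) (hA : #A = k) (hC : #C = k)

def ParkedForestWithComponent : Type :=
  {y : ParkedForest m // (∃ v, compOf y.1.1 v = A) ∧ carsArrivingIn y.1.2 A = C}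

/-- Relabel a fully parked tree onto `A` (its cars onto the positions `C`) and a fully parked
forest onto `Aᶜ` (its cars onto `Cᶜ`). -/
def glueParked (z : ParkedTree k × ParkedForest (m - k)) : ParkedForestWithComponent A C :=
  ⟨⟨(glueForest (splitEquiv A hA) z.1.1.1 z.2.1.1,
      glueCars (splitEquiv A hA) (splitEquiv C hC) z.1.1.2 z.2.1.2),
    z.1.2.1.1.glueForest z.2.2.1,
    (parkAll_glue_isSome_iff z.1.2.1.1 z.2.2.1).2 ⟨z.1.2.2, z.2.2.2⟩⟩,
    ⟨_, compOf_glueForest z.1.2.1 z.2.2.1 z.1.2.1.2.choose⟩,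
    by ext pos; simp [carsArrivingIn, glueCars_mem_iff]⟩

lemma glueParked_injective : Function.Injective (glueParked A C hA hC) := by
  rintro ⟨⟨⟨t₁, c₁⟩, _⟩, ⟨⟨t₁', c₁'⟩, _⟩⟩ ⟨⟨⟨t₂, c₂⟩, _⟩, ⟨⟨t₂', c₂'⟩, _⟩⟩ h
  have hq : glueForest (splitEquiv A hA) t₁ t₁' = glueForest (splitEquiv A hA) t₂ t₂' :=
    congrArg (fun y => y.1.1.1) h
  have hb : glueCars (splitEquiv A hA) (splitEquiv C hC) c₁ c₁' =
      glueCars (splitEquiv A hA) (splitEquiv C hC) c₂ c₂' :=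
    congrArg (fun y => y.1.1.2) h
  have hc : Sum.map c₁ c₁' = Sum.map c₂ c₂' := by
    funext y
    simpa [glueCars] using congrFun hb (splitEquiv C hC y)
  obtain rfl : t₁ = t₂ := by
    rw [← restrictLeft_glueForest (e := splitEquiv A hA) (t := t₁) (t' := t₁'), hq,
      restrictLeft_glueForest]
  obtain rfl : t₁' = t₂' := by
    rw [← restrictRight_glueForest (e := splitEquiv A hA) (t := t₁) (t' := t₁'), hq,
      restrictRight_glueForest]
  obtain rfl : c₁ = c₂ := funext fun j => by simpa using congrFun hc (.inl j)
  obtain rfl : c₁' = c₂' := funext fun j => by simpa using congrFun hc (.inr j)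
  rfl

lemma glueParked_surjective : Function.Surjective (glueParked A C hA hC) := by
  rintro ⟨⟨⟨q, b⟩, hq, hb⟩, ⟨v, hv⟩, hbC⟩
  set e := splitEquiv A hA
  set f := splitEquiv C hC
  have hcl : IsParentClosed q A := hv ▸ hq.isParentClosed_compOf v
  have hcl' : IsParentClosed q Aᶜ := hv ▸ hq.isParentClosed_compl_compOf v
  have hqe : glueForest e (restrictLeft e q) (restrictRight e q) = q := glueForest_restrict hcl hcl'
  have harr : ∀ pos, b pos ∈ A ↔ pos ∈ C := fun pos => by simp [← hbC, carsArrivingIn]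
  have hcars : ∀ j, ∃ i, e (.inl i) = b (f (.inl j)) := fun j =>
    mem_iff_mem_range_splitEquiv_inl.1 ((harr _).2 (by simp [f]))
  have hcars' : ∀ j, ∃ i, e (.inr i) = b (f (.inr j)) := fun j =>
    notMem_iff_mem_range_splitEquiv_inr.1 (mt (harr _).1 (by simp [f]))
  choose c hc using hcars
  choose c' hc' using hcars'
  have hbe : glueCars e f c c' = b := by
    funext pos
    obtain ⟨y | y, rfl⟩ := f.surjective pos <;> simp [glueCars, hc, hc']
  have ht : IsRootedTree (restrictLeft e q) := hq.isRootedTree_restrictLeft hv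
  have ht' : IsRootedForest (restrictRight e q) :=
    hq.of_map fun j => (hcl'.map_restrictRight j).symm
  have hpark := (parkAll_glue_isSome_iff (hC := hC) (c := c) (c' := c') ht.1 ht').1
    (by rwa [hqe, hbe])
  exact ⟨(⟨(restrictLeft e q, c), ht, hpark.1⟩, ⟨(restrictRight e q, c'), ht', hpark.2⟩),
    Subtype.ext (Subtype.ext (Prod.ext hqe hbe))⟩

end ComponentSplit

lemma card_parkedForestWithComponent {m k : ℕ} {A C : Finset (Fin m)} (hA : #A = k)
    (hC : #C = k) :
    Nat.card (ParkedForestWithComponent A C) = PF k k * Nat.card (ParkedForest (m - k)) := by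
  rw [← Nat.card_eq_of_bijective _ ⟨glueParked_injective A C hA hC,
    glueParked_surjective A C hA hC⟩, Nat.card_prod]
  rfl

section MarkedCount
variable {m : ℕ}

def markedComponent (x : Fin m × ParkedForest m) : Finset (Fin m) × Finset (Fin m) :=
  (compOf x.2.1.1 x.1, carsArrivingIn x.2.1.2 (compOf x.2.1.1 x.1))

lemma markedComponent_eq_iff {x : Fin m × ParkedForest m} {A C : Finset (Fin m)} :
    markedComponent x = (A, C) ↔ compOf x.2.1.1 x.1 = A ∧ carsArrivingIn x.2.1.2 A = C := by
  rw [markedComponent, Prod.mk.injEq]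
  constructor <;> rintro ⟨rfl, h⟩ <;> exact ⟨rfl, h⟩

def markedFiberEquiv (A C : Finset (Fin m)) :
    {x // markedComponent x = (A, C)} ≃ {v // v ∈ A} × ParkedForestWithComponent A C where
  toFun x :=
    have h := markedComponent_eq_iff.1 x.2
    (⟨x.1.1, h.1.subst (motive := (x.1.1 ∈ ·)) (self_mem_compOf _)⟩, ⟨x.1.2, ⟨x.1.1, h.1⟩, h.2⟩)
  invFun y := ⟨(y.1.1, y.2.1), by
    obtain ⟨⟨v, hv⟩, ⟨y, ⟨w, hw⟩, hC⟩⟩ := y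
    exact markedComponent_eq_iff.2 ⟨(compOf_eq_of_mem (hw ▸ hv)).trans hw, hC⟩⟩
  left_inv _ := rfl
  right_inv _ := rfl

lemma card_markedFiber (A C : Finset (Fin m)) :
    Nat.card {x // markedComponent x = (A, C)} =
      if #C = #A then #A * (PF #A #A * Nat.card (ParkedForest (m - #A))) else 0 := by
  split_ifs with h
  · rw [Nat.card_congr (markedFiberEquiv A C), Nat.card_prod,
      card_parkedForestWithComponent rfl h, Nat.card_eq_fintype_card, Fintype.card_coe]
  · refine Nat.card_eq_zero.2 (.inl ⟨?_⟩)
    rintro ⟨⟨v, ⟨⟨q, b⟩, hq, hb⟩⟩, hx⟩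
    obtain ⟨rfl, rfl⟩ := markedComponent_eq_iff.1 hx
    exact h (hq.card_carsArrivingIn_compOf hb v)

/-- Sort the fully parked forests with a marked vertex by the size `k` of the tree of the
marked vertex: the two binomials choose its vertices and the positions of its cars. -/
lemma card_marked_parkedForest (m : ℕ) :
    m * Nat.card (ParkedForest m) = ∑ k ∈ range (m + 1),
      m.choose k * (m.choose k * (k * (PF k k * Nat.card (ParkedForest (m - k))))) := by
  have hpow (g : ℕ → ℕ) : ∑ A : Finset (Fin m), g #A = ∑ k ∈ range (m + 1), m.choose k * g k := by
    simpa using sum_powerset_apply_card g (x := (univ : Finset (Fin m)))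
  calc m * Nat.card (ParkedForest m)
      = Nat.card (Fin m × ParkedForest m) := by simp [Nat.card_prod]
    _ = ∑ AC, Nat.card {x // markedComponent x = AC} := by
      rw [← Nat.card_sigma, Nat.card_congr (Equiv.sigmaFiberEquiv markedComponent)]
    _ = ∑ A : Finset (Fin m), ∑ C : Finset (Fin m),
          if #C = #A then #A * (PF #A #A * Nat.card (ParkedForest (m - #A))) else 0 := by
      simp only [Fintype.sum_prod_type, card_markedFiber]
    _ = ∑ A : Finset (Fin m),
          m.choose #A * (#A * (PF #A #A * Nat.card (ParkedForest (m - #A)))) := by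
      refine sum_congr rfl fun A _ => ?_
      have hA : #A ≤ m := by simpa using card_le_univ A
      rw [hpow fun k => if k = #A then _ else 0]
      simp [not_lt.2 hA]
    _ = _ := hpow fun k => m.choose k * (k * (PF k k * Nat.card (ParkedForest (m - k))))

end MarkedCount

section Series
open PowerSeries
open scoped Nat

lemma coeff_pow_eq_zero_of_lt {G : ℚ⟦X⟧} (hG : constantCoeff G = 0) {n d : ℕ} (h : n < d) :
    coeff n (G ^ d) = 0 :=
  X_pow_dvd_iff.1 (pow_dvd_pow_of_dvd (X_dvd_iff.2 hG) d) n h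

lemma expComp_eq_subst {G : ℚ⟦X⟧} (hG : constantCoeff G = 0) :
    expComp G = (exp ℚ).subst G := by
  ext n
  rw [coeff_subst' (HasSubst.of_constantCoeff_zero' hG), finsum_eq_sum_of_support_subset
    (s := range (n + 1)) _ fun d hd => ?_, expComp, coeff_mk]
  · refine sum_congr rfl fun d _ => ?_
    simp [div_eq_inv_mul]
  · by_contra hdn
    exact hd (by simp [coeff_pow_eq_zero_of_lt hG (not_lt.1 (mt mem_range.2 hdn))])

lemma derivative_expComp {G : ℚ⟦X⟧} (hG : constantCoeff G = 0) :
    d⁄dX ℚ (expComp G) = d⁄dX ℚ G * expComp G := by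
  rw [expComp_eq_subst hG, derivative_subst (HasSubst.of_constantCoeff_zero' hG),
    derivative_exp, mul_comm]

@[simp] lemma constantCoeff_expComp (G : ℚ⟦X⟧) : constantCoeff (expComp G) = 1 := by
  rw [← coeff_zero_eq_constantCoeff_apply, expComp, coeff_mk]
  simp

lemma eq_of_derivative_eq_mul {f g h : ℚ⟦X⟧} (hf : d⁄dX ℚ f = h * f) (hg : d⁄dX ℚ g = h * g)
    (hg0 : constantCoeff g ≠ 0) (hfg : constantCoeff f = constantCoeff g) : f = g := by
  have hgg : g * g⁻¹ = 1 := PowerSeries.mul_inv_cancel g hg0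
  have hquot : f * g⁻¹ = 1 := by
    refine derivative.ext ?_ (by simp [hfg, hg0])
    rw [Derivation.leibniz, derivative_inv', hf, hg, derivative_one, smul_eq_mul, smul_eq_mul]
    linear_combination (-(f * g⁻¹ * h)) * hgg
  calc f = f * g⁻¹ * g := by rw [mul_assoc, mul_comm g⁻¹, hgg, mul_one]
    _ = g := by rw [hquot, one_mul]

lemma constantCoeff_Fser : constantCoeff Fser = 0 := by
  rw [← coeff_zero_eq_constantCoeff_apply, Fser, coeff_mk, if_pos rfl]

lemma card_parkedForest_zero : Nat.card (ParkedForest 0) = 1 := by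
  have : Unique (ParkedForest 0) :=
    { default := ⟨(finZeroElim, finZeroElim), finZeroElim, rfl⟩
      uniq := fun x => Subtype.ext (Prod.ext (funext finZeroElim) (funext finZeroElim)) }
  exact Nat.card_unique

noncomputable def parkedForestSeries : ℚ⟦X⟧ :=
  mk fun m => (Nat.card (ParkedForest m) : ℚ) / (m ! : ℚ) ^ 2

lemma Nser_eq_X_mul : Nser = X * parkedForestSeries := by
  ext n
  cases n with
  | zero => simp [Nser]
  | succ n =>
    rw [coeff_succ_X_mul, Nser, parkedForestSeries, coeff_mk, coeff_mk, if_neg n.succ_ne_zero,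
      Nat.add_sub_cancel, PFroot_succ, Nat.factorial_succ]
    push_cast
    field_simp

/-- The marked-vertex decomposition, divided by `(m + 1)!²`. -/
lemma coeff_succ_parkedForestSeries (m : ℕ) :
    (m + 1 : ℚ) * coeff (m + 1) parkedForestSeries = ∑ i ∈ range (m + 1),
      coeff i (d⁄dX ℚ Fser) * coeff (m - i) parkedForestSeries := by
  have hcard := congrArg (Nat.cast (R := ℚ)) (card_marked_parkedForest (m + 1))
  push_cast at hcard
  rw [sum_range_succ'] at hcard
  simp only [CharP.cast_eq_zero, zero_mul, mul_zero, add_zero] at hcard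
  simp only [parkedForestSeries, coeff_mk, coeff_derivative, Fser, Nat.succ_ne_zero, if_false,
    ← mul_div_assoc, hcard, sum_div]
  refine sum_congr rfl fun i hi => ?_
  have him : i + 1 ≤ m + 1 := by simpa [Nat.lt_succ_iff] using hi
  rw [Nat.cast_choose ℚ him, show m + 1 - (i + 1) = m - i by omega]
  push_cast
  field_simp

lemma derivative_parkedForestSeries :
    d⁄dX ℚ parkedForestSeries = d⁄dX ℚ Fser * parkedForestSeries := by
  ext m
  rw [coeff_derivative, coeff_mul, Nat.sum_antidiagonal_eq_sum_range_succ_mk, mul_comm,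
    coeff_succ_parkedForestSeries]

lemma constantCoeff_parkedForestSeries : constantCoeff parkedForestSeries = 1 := by
  rw [← coeff_zero_eq_constantCoeff_apply, parkedForestSeries, coeff_mk, card_parkedForest_zero]
  simp

lemma parkedForestSeries_eq_expComp : parkedForestSeries = expComp Fser :=
  eq_of_derivative_eq_mul derivative_parkedForestSeries (derivative_expComp constantCoeff_Fser)
    (by simp) (by simp [constantCoeff_parkedForestSeries])

end Series

/-- The EGFs of nearly and fully parked trees satisfy `N(x) = x · exp(F(x))`. -/
theorem stmt13 : Nser = PowerSeries.X * expComp Fser := by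
  rw [Nser_eq_X_mul, parkedForestSeries_eq_expComp]
end

section
/- The formal power series S(x) = 1 − ln 2 − √(1−4x) + ln(1 + √(1−4x)) satisfies S'(x) = (1 − √(1−4x))/(2x), the generating function of the Catalan numbers; equivalently, the coefficients of S satisfy [x^n]S(x) = (2n-2)!/(n!)^2 for n ≥ 1. -/
open Real

/-- `S(x) = 1 − ln 2 − √(1−4x) + ln(1+√(1−4x))`. -/
noncomputable def Sfun (x : ℝ) : ℝ :=
  1 - Real.log 2 - Real.sqrt (1 - 4 * x) + Real.log (1 + Real.sqrt (1 - 4 * x))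

open Filter Finset FormalMultilinearSeries
open scoped ENNReal NNReal


noncomputable def aseq : ℕ → ℝ := fun n => (catalan (n - 1) : ℝ) / n

lemma aseq_zero : aseq 0 = 0 := by simp [aseq]

lemma aseq_succ (n : ℕ) : aseq (n + 1) = (catalan n : ℝ) / (n + 1) := by
  simp [aseq]

lemma catalan_le_pow (n : ℕ) : (catalan n : ℝ) ≤ 4 ^ n := by
  have h1 : catalan n ≤ n.centralBinom := by
    calc catalan n ≤ (n + 1) * catalan n := Nat.le_mul_of_pos_left _ n.succ_pos
    _ = n.centralBinom := succ_mul_catalan_eq_centralBinom n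
  have h2 : n.centralBinom ≤ 4 ^ n := by
    have : (2 * n).choose n ≤ ∑ i ∈ range (2 * n + 1), (2 * n).choose i := by
      apply Finset.single_le_sum (fun i _ => Nat.zero_le _)
      simp [Nat.lt_succ_iff]
      omega
    calc n.centralBinom = (2 * n).choose n := n.centralBinom_eq_two_mul_choose
    _ ≤ ∑ i ∈ range (2 * n + 1), (2 * n).choose i := this
    _ = 2 ^ (2 * n) := Nat.sum_range_choose _
    _ = 4 ^ n := by rw [pow_mul]; norm_num
  exact_mod_cast h1.trans h2

lemma aseq_nonneg (n : ℕ) : 0 ≤ aseq n := by unfold aseq; positivity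

lemma aseq_le_pow (n : ℕ) : aseq n ≤ 4 ^ n := by
  cases n with
  | zero => simp [aseq_zero]
  | succ m =>
    rw [aseq_succ]
    have h1 : (catalan m : ℝ) / (m + 1) ≤ (catalan m : ℝ) := by
      apply div_le_self (by positivity)
      exact_mod_cast Nat.le_add_left 1 m
    refine h1.trans ((catalan_le_pow m).trans ?_)
    apply pow_le_pow_right₀ (by norm_num) (Nat.le_succ m)

noncomputable def pser : FormalMultilinearSeries ℝ ℝ ℝ := FormalMultilinearSeries.ofScalars ℝ aseq

lemma radius_ge : (1 / 4 : ℝ≥0∞) ≤ pser.radius := by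
  have h : ∀ n : ℕ, ‖pser n‖ * ((1/4 : ℝ≥0) : ℝ) ^ n ≤ 1 := by
    intro n
    rw [pser, ofScalars_norm]
    have h1 : ‖aseq n‖ ≤ 4 ^ n := by
      rw [Real.norm_eq_abs, abs_of_nonneg (aseq_nonneg n)]; exact aseq_le_pow n
    have h2 : ((1/4 : ℝ≥0) : ℝ) ^ n = (1/4 : ℝ) ^ n := by norm_num
    rw [h2]
    calc ‖aseq n‖ * (1/4 : ℝ) ^ n ≤ 4 ^ n * (1/4) ^ n := by
          apply mul_le_mul_of_nonneg_right h1 (by positivity)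
    _ = 1 := by rw [← mul_pow]; norm_num
  have := pser.le_radius_of_bound 1 h
  convert this using 1
  simp [ENNReal.coe_div]

noncomputable def gfun : ℝ → ℝ := pser.sum

lemma mem_ball_iff (y : ℝ) : y ∈ Metric.eball (0 : ℝ) (1/4 : ℝ≥0∞) ↔ |y| < 1/4 := by
  rw [Metric.mem_eball, edist_dist, Real.dist_eq, sub_zero]
  rw [show (1/4 : ℝ≥0∞) = ENNReal.ofReal (1/4) by norm_num [ENNReal.ofReal_div_of_pos]]
  rw [ENNReal.ofReal_lt_ofReal_iff (by norm_num)]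

lemma hg : HasFPowerSeriesOnBall gfun pser 0 (1/4 : ℝ≥0∞) :=
  (pser.hasFPowerSeriesOnBall (lt_of_lt_of_le (by norm_num) radius_ge)).mono
    (by norm_num) radius_ge

lemma hasSum_g {y : ℝ} (hy : |y| < 1/4) :
    HasSum (fun n => aseq n * y ^ n) (gfun y) := by
  have := hg.hasSum ((mem_ball_iff y).2 hy)
  rw [zero_add] at this
  refine this.congr_fun fun n => ?_
  rw [pser, FormalMultilinearSeries.ofScalars_apply_eq, smul_eq_mul]

lemma aseq_succ' (n : ℕ) : aseq (n + 1) = (catalan n : ℝ) / (n + 1) := by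
  simp [aseq]

noncomputable def cfun (y : ℝ) : ℝ := ∑' n, (catalan n : ℝ) * y ^ n

lemma summable_cat_norm {y : ℝ} (hy : |y| < 1/4) (k : ℕ) :
    Summable (fun n => ‖(catalan (n + k) : ℝ) * y ^ n‖) := by
  apply Summable.of_nonneg_of_le (fun n => norm_nonneg _)
    (fun n => ?_) (((summable_geometric_of_lt_one (by positivity) (by linarith [abs_nonneg y] : 4 * |y| < 1)).mul_left ((4:ℝ)^k)))
  rw [norm_mul, norm_pow, Real.norm_eq_abs, Real.norm_eq_abs,
    abs_of_nonneg (by positivity : (0:ℝ) ≤ (catalan (n+k) : ℝ))]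
  calc (catalan (n+k) : ℝ) * |y| ^ n ≤ 4 ^ (n+k) * |y| ^ n := by
        apply mul_le_mul_of_nonneg_right (catalan_le_pow _) (by positivity)
  _ = 4 ^ k * (4 * |y|) ^ n := by rw [pow_add, mul_pow]; ring

lemma summable_cat {y : ℝ} (hy : |y| < 1/4) (k : ℕ) :
    Summable (fun n => (catalan (n + k) : ℝ) * y ^ n) :=
  (summable_cat_norm hy k).of_norm

lemma hasSum_cat {y : ℝ} (hy : |y| < 1/4) :
    HasSum (fun n => (catalan n : ℝ) * y ^ n) (cfun y) := by
  have := (summable_cat hy 0).hasSum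
  simpa [cfun] using this

lemma cat_fe {y : ℝ} (hy : |y| < 1/4) : cfun y = 1 + y * (cfun y)^2 := by
  have hs := summable_cat_norm hy 0
  have hs0 : Summable (fun n => ‖(catalan n : ℝ) * y ^ n‖) := by simpa using hs
  have hmul : (cfun y) * (cfun y) = ∑' n, ∑ kl ∈ Finset.HasAntidiagonal.antidiagonal n,
      ((catalan kl.1 : ℝ) * y ^ kl.1) * ((catalan kl.2 : ℝ) * y ^ kl.2) := by
    rw [show cfun y = ∑' n, (catalan n : ℝ) * y ^ n from rfl]
    exact tsum_mul_tsum_eq_tsum_sum_antidiagonal_of_summable_norm hs0 hs0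
  have hterm : ∀ n, ∑ kl ∈ Finset.HasAntidiagonal.antidiagonal n,
      ((catalan kl.1 : ℝ) * y ^ kl.1) * ((catalan kl.2 : ℝ) * y ^ kl.2)
      = (catalan (n+1) : ℝ) * y ^ n := by
    intro n
    rw [catalan_succ']
    push_cast
    rw [Finset.sum_mul]
    apply Finset.sum_congr rfl
    intro kl hkl
    have h := Finset.HasAntidiagonal.mem_antidiagonal.1 hkl
    rw [← h, pow_add]; ring
  have hd : HasSum (fun n => (catalan (n+1) : ℝ) * y ^ n) (cfun y * cfun y) := by
    have := (summable_cat hy 1).hasSum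
    rw [hmul, tsum_congr hterm]
    exact this
  have h1 : HasSum (fun n => (catalan (n+1) : ℝ) * y ^ (n+1)) (cfun y - 1) := by
    refine (hasSum_nat_add_iff (f := fun n => (catalan n : ℝ) * y ^ n) 1).2 ?_
    simpa using hasSum_cat hy
  have h2 : HasSum (fun n => (catalan (n+1) : ℝ) * y ^ (n+1)) (y * (cfun y * cfun y)) := by
    refine (hd.mul_left y).congr_fun fun n => by ring
  have := h1.unique h2
  nlinarith [this]

lemma mul_deriv_g {y : ℝ} (hy : |y| < 1/4) : y * deriv gfun y = y * cfun y := by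
  have hf := hg.fderiv
  have hsum := hf.hasSum ((mem_ball_iff y).2 hy)
  rw [zero_add] at hsum
  have hsum2 := (ContinuousLinearMap.apply ℝ ℝ y).hasSum hsum
  have hterm : ∀ n, (ContinuousLinearMap.apply ℝ ℝ y) (pser.derivSeries n fun _ => y)
      = (catalan n : ℝ) * y ^ (n+1) := by
    intro n
    have h := pser.derivSeries_apply_diag n y
    rw [ContinuousLinearMap.apply_apply, h, pser, FormalMultilinearSeries.ofScalars_apply_eq,
      aseq_succ', nsmul_eq_mul]
    push_cast
    rw [smul_eq_mul]
    field_simp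
  rw [funext hterm] at hsum2
  have h3 : HasSum (fun n => (catalan n : ℝ) * y ^ (n+1)) (y * cfun y) :=
    ((hasSum_cat hy).mul_left y).congr_fun fun n => by ring
  have h4 := hsum2.unique h3
  rw [← h4, ContinuousLinearMap.apply_apply]
  have hL : ∀ L : ℝ →L[ℝ] ℝ, L y = y * L 1 := by
    intro L
    rw [show L y = L (y • 1) by rw [smul_eq_mul, mul_one], map_smul, smul_eq_mul]
  rw [hL (fderiv ℝ gfun y), fderiv_apply_one_eq_deriv]

lemma phi_sq {y : ℝ} (hy : |y| < 1/4) : (2*y*deriv gfun y - 1)^2 = 1 - 4*y := by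
  have h1 := mul_deriv_g hy
  have h2 := cat_fe hy
  have h3 : 2*y*deriv gfun y = 2*(y * cfun y) := by rw [mul_assoc, h1]
  rw [h3]
  linear_combination (-4*y) * h2

lemma contOn_deriv_g : ContinuousOn (deriv gfun) {y : ℝ | |y| < 1/4} := by
  have h := hg.fderiv.continuousOn
  have hset : Metric.eball (0:ℝ) (1/4 : ℝ≥0∞) = {y : ℝ | |y| < 1/4} := Set.ext mem_ball_iff
  rw [hset] at h
  have heq : deriv gfun = fun y => (ContinuousLinearMap.apply ℝ ℝ 1) (fderiv ℝ gfun y) := by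
    funext y
    rw [ContinuousLinearMap.apply_apply, fderiv_apply_one_eq_deriv]
  rw [heq]
  exact (ContinuousLinearMap.apply ℝ ℝ 1).continuous.comp_continuousOn h

lemma phi_neg {y : ℝ} (hy : |y| < 1/4) : 2*y*deriv gfun y - 1 < 0 := by
  have hcont : ContinuousOn (fun z => 2*z*deriv gfun z - 1) {z : ℝ | |z| < 1/4} := by
    apply ContinuousOn.sub ?_ continuousOn_const
    exact (continuousOn_const.mul continuousOn_id).mul contOn_deriv_g
  by_contra hcon
  push_neg at hcon
  have h0 : 2*(0:ℝ)*deriv gfun 0 - 1 = -1 := by ring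
  rcases le_total 0 y with h|h
  · have hsub : Set.Icc (0:ℝ) y ⊆ {z : ℝ | |z| < 1/4} := fun z hz => by
      rw [Set.mem_setOf_eq, abs_lt]
      have := (abs_lt.1 hy)
      constructor <;> [linarith [hz.1]; linarith [hz.2]]
    have hIVT := intermediate_value_Icc h (hcont.mono hsub)
    have h0mem : (0:ℝ) ∈ Set.Icc (2*(0:ℝ)*deriv gfun 0 - 1) (2*y*deriv gfun y - 1) := by
      rw [h0]; exact ⟨by linarith, hcon⟩
    obtain ⟨z, hz, hz0⟩ := hIVT h0mem
    simp only at hz0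
    have hzB : |z| < 1/4 := hsub hz
    have hsq := phi_sq hzB
    rw [hz0] at hsq
    have : (1:ℝ) - 4*z > 0 := by have := (abs_lt.1 hzB).2; linarith
    simp at hsq; linarith
  · have hsub : Set.Icc y (0:ℝ) ⊆ {z : ℝ | |z| < 1/4} := fun z hz => by
      rw [Set.mem_setOf_eq, abs_lt]
      have := (abs_lt.1 hy)
      constructor <;> [linarith [hz.1]; linarith [hz.2]]
    have hIVT := intermediate_value_Icc' h (hcont.mono hsub)
    have h0mem : (0:ℝ) ∈ Set.Icc (2*(0:ℝ)*deriv gfun 0 - 1) (2*y*deriv gfun y - 1) := by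
      rw [h0]; exact ⟨by linarith, hcon⟩
    obtain ⟨z, hz, hz0⟩ := hIVT h0mem
    simp only at hz0
    have hzB : |z| < 1/4 := hsub hz
    have hsq := phi_sq hzB
    rw [hz0] at hsq
    have : (1:ℝ) - 4*z > 0 := by have := (abs_lt.1 hzB).2; linarith
    simp at hsq; linarith

lemma deriv_g_eq {y : ℝ} (hy : |y| < 1/4) :
    2*y*deriv gfun y - 1 = - Real.sqrt (1 - 4*y) := by
  have h1 := phi_sq hy
  have h2 := phi_neg hy
  have h3 : Real.sqrt (1-4*y) = |2*y*deriv gfun y - 1| := by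
    rw [← h1, Real.sqrt_sq_eq_abs]
  rw [h3, abs_of_neg h2, neg_neg]

lemma hasDerivAt_Sfun {x : ℝ} (hx : |x| < 1 / 4) :
    HasDerivAt Sfun (2 / (1 + Real.sqrt (1 - 4 * x))) x := by
  have h1 : (0:ℝ) < 1 - 4 * x := by have := (abs_lt.1 hx).2; linarith
  set s := Real.sqrt (1 - 4 * x) with hs
  have hspos : 0 < s := Real.sqrt_pos.2 h1
  have hs1 : 0 < 1 + s := by linarith
  have hinner : HasDerivAt (fun y : ℝ => 1 - 4 * y) (-4) x := by
    simpa using (hasDerivAt_id x).const_mul (4:ℝ) |>.const_sub 1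
  have hsq : HasDerivAt (fun y : ℝ => Real.sqrt (1 - 4 * y)) (-2 / s) x := by
    have h := (Real.hasDerivAt_sqrt (ne_of_gt h1)).comp x hinner
    refine h.congr_deriv ?_
    rw [← hs]
    field_simp
    ring
  have hlog : HasDerivAt (fun y : ℝ => Real.log (1 + Real.sqrt (1 - 4 * y)))
      ((-2 / s) / (1 + s)) x := by
    have hin2 : HasDerivAt (fun y : ℝ => 1 + Real.sqrt (1 - 4 * y)) (-2 / s) x :=
      hsq.const_add 1
    have h := (Real.hasDerivAt_log (ne_of_gt hs1)).comp x hin2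
    refine h.congr_deriv ?_
    field_simp
  have hAll := ((hasDerivAt_const x (1 - Real.log 2)).sub hsq).add hlog
  have : Sfun = fun y : ℝ => (1 - Real.log 2 - Real.sqrt (1 - 4 * y))
      + Real.log (1 + Real.sqrt (1 - 4 * y)) := by
    funext y; rw [Sfun]
  rw [this]
  refine hAll.congr_deriv ?_
  field_simp
  ring

lemma deriv_Sfun {x : ℝ} (hx : |x| < 1 / 4) :
    deriv Sfun x = 2 / (1 + Real.sqrt (1 - 4 * x)) := (hasDerivAt_Sfun hx).deriv

lemma two_div_eq {x : ℝ} (hx : |x| < 1 / 4) (hx0 : x ≠ 0) :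
    2 / (1 + Real.sqrt (1 - 4 * x)) = (1 - Real.sqrt (1 - 4 * x)) / (2 * x) := by
  have h1 : (0:ℝ) < 1 - 4 * x := by have := (abs_lt.1 hx).2; linarith
  have hs : Real.sqrt (1 - 4 * x) ^ 2 = 1 - 4 * x := Real.sq_sqrt h1.le
  have hspos : 0 < Real.sqrt (1 - 4 * x) := Real.sqrt_pos.2 h1
  rw [div_eq_div_iff (by linarith) (by rcases hx0.lt_or_gt with h|h <;> [nlinarith; nlinarith])]
  nlinarith [hs]

lemma deriv_g_eq_deriv_S {y : ℝ} (hy : |y| < 1/4) : deriv gfun y = deriv Sfun y := by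
  rcases eq_or_ne y 0 with rfl | hy0
  · have h1 : deriv Sfun 0 = 1 := by
      rw [deriv_Sfun (by norm_num : |(0:ℝ)| < 1/4)]
      norm_num
    have h2 : deriv gfun 0 = 1 := by
      rw [hg.hasFPowerSeriesAt.deriv, pser, FormalMultilinearSeries.ofScalars_apply_eq]
      rw [aseq_succ' 0]
      norm_num
    rw [h1, h2]
  · have h1 := deriv_g_eq hy
    have h2 : deriv gfun y = (1 - Real.sqrt (1 - 4*y)) / (2*y) := by
      field_simp
      linarith [h1]
    rw [h2, deriv_Sfun hy, two_div_eq hy hy0]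

lemma S_eq_g {y : ℝ} (hy : |y| < 1/4) : Sfun y = gfun y := by
  set s : Set ℝ := {z : ℝ | |z| < 1/4} with hsdef
  have hball : s = Metric.ball (0:ℝ) (1/4) := by
    ext z
    simp only [Set.mem_setOf_eq, Metric.mem_ball, Real.dist_eq, sub_zero, hsdef]
  have hconv : Convex ℝ s := by rw [hball]; exact convex_ball 0 (1/4)
  have hopen : IsOpen s := by rw [hball]; exact Metric.isOpen_ball
  have hdiffS : ∀ z ∈ s, HasDerivAt Sfun (deriv Sfun z) z := fun z hz =>
    (hasDerivAt_Sfun hz).deriv ▸ hasDerivAt_Sfun hz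
  have hdiffg : ∀ z ∈ s, DifferentiableAt ℝ gfun z := by
    intro z hz
    have h1 := hg.differentiableOn _ ((mem_ball_iff z).2 hz)
    exact h1.differentiableAt (Metric.isOpen_eball.mem_nhds ((mem_ball_iff z).2 hz))
  have hdiff : DifferentiableOn ℝ (fun z => Sfun z - gfun z) s := fun z hz =>
    ((hdiffS z hz).differentiableAt.sub (hdiffg z hz)).differentiableWithinAt
  have hzero : ∀ z ∈ s, fderivWithin ℝ (fun z => Sfun z - gfun z) s z = 0 := by
    intro z hz
    have hD : HasDerivAt (fun z => Sfun z - gfun z) 0 z := by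
      have h1 := (hdiffS z hz).sub ((hdiffg z hz).hasDerivAt)
      rwa [deriv_g_eq_deriv_S hz, sub_self] at h1
    rw [fderivWithin_of_isOpen hopen hz, hD.hasFDerivAt.fderiv]
    ext
    simp
  have h0mem : (0:ℝ) ∈ s := by rw [hsdef]; norm_num
  have hymem : y ∈ s := hy
  have hconst := hconv.is_const_of_fderivWithin_eq_zero hdiff hzero hymem h0mem
  have hS0 : Sfun 0 = 0 := by
    have : (1:ℝ) + 1 = 2 := by norm_num
    simp [Sfun, Real.sqrt_one, this]
  have hg0 : gfun 0 = 0 := by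
    have h := hasSum_g (by norm_num : |(0:ℝ)| < 1/4)
    have h2 : (fun n => aseq n * (0:ℝ)^n) = fun _ => (0:ℝ) := by
      funext n
      cases n with
      | zero => simp [aseq_zero]
      | succ m => simp
    rw [h2] at h
    simpa using h.unique hasSum_zero
  rw [hS0, hg0] at hconst
  linarith [hconst]


/-- `S` satisfies `S'(x) = (1 − √(1−4x))/(2x)` (the Catalan GF), and its Taylor
coefficients at `0` are `[xⁿ]S = (2n−2)!/(n!)²` for `n ≥ 1`. -/
theorem stmt16 :
    (∀ x : ℝ, x ≠ 0 → |x| < 1 / 4 →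
        deriv Sfun x = (1 - Real.sqrt (1 - 4 * x)) / (2 * x)) ∧
      ∀ n : ℕ, 1 ≤ n →
        iteratedDeriv n Sfun 0 / (Nat.factorial n : ℝ) =
          (Nat.factorial (2 * n - 2) : ℝ) / (Nat.factorial n : ℝ) ^ 2 := by
  constructor
  · intro x hx0 hx
    rw [deriv_Sfun hx, two_div_eq hx hx0]
  · intro n hn
    have hS : HasFPowerSeriesOnBall Sfun pser 0 (1/4 : ℝ≥0∞) := by
      refine ⟨radius_ge, by norm_num, ?_⟩
      intro y hy
      rw [zero_add, S_eq_g ((mem_ball_iff y).1 hy)]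
      have := hg.hasSum hy
      rwa [zero_add] at this
    have hfac := hS.factorial_smul (y := (1:ℝ)) n
    have hp : pser n (fun _ => (1:ℝ)) = aseq n := by
      rw [pser, FormalMultilinearSeries.ofScalars_apply_eq]; simp
    rw [hp] at hfac
    have hiter : iteratedDeriv n Sfun 0 = n.factorial • aseq n := by
      rw [iteratedDeriv_eq_iteratedFDeriv]
      exact hfac.symm
    rw [hiter]
    obtain ⟨m, rfl⟩ : ∃ m, n = m + 1 := ⟨n-1, by omega⟩
    rw [aseq_succ']
    have h2 : 2*(m+1) - 2 = 2*m := by omega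
    rw [h2]
    have hle : m ≤ 2*m := by omega
    have key : ((m+1) * catalan m) * (Nat.factorial m * Nat.factorial m)
        = Nat.factorial (2*m) := by
      rw [succ_mul_catalan_eq_centralBinom, Nat.centralBinom_eq_two_mul_choose]
      have h3 := Nat.choose_mul_factorial_mul_factorial hle
      have h4 : 2*m - m = m := by omega
      rw [h4] at h3
      rw [← h3]; ring
    have keyR : ((m:ℝ)+1) * (catalan m : ℝ) * (Nat.factorial m * Nat.factorial m)
        = Nat.factorial (2*m) := by exact_mod_cast key
    have hfs : (Nat.factorial (m+1) : ℝ) = ((m:ℝ)+1) * Nat.factorial m := by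
      rw [Nat.factorial_succ]; push_cast; ring
    have hne : (Nat.factorial (m+1) : ℝ) ≠ 0 := by
      exact_mod_cast (Nat.factorial_pos (m+1)).ne'
    have hm1 : ((m:ℝ)+1) ≠ 0 := by positivity
    rw [nsmul_eq_mul]
    field_simp
    rw [hfs]
    linear_combination ((m:ℝ)+1) * keyR
end

section
/- In a uniform rooted Cayley tree on n labeled vertices, the distance between two independent uniformly chosen distinct vertices equals h with probability ((h+1)/(n-1)) · (n(n-1)···(n-h))/n^{h+1}, for 1 ≤ h ≤ n-1. -/
/-!
Rooting a tree at `u` and sending every other vertex to its neighbour towards `u` identifies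
labelled trees with maps `f : V → V` all of whose orbits reach the fixed point `u`; a vertex `v`
is at distance `h` from `u` exactly when its orbit first hits `u` after `h` steps. Fixing the
`h + 1` vertices `v, f v, …, f^[h] v = u` of that path turns `f` into a rooted forest whose root
set is the path, and this is reversible. So the count is the number `n (n-1) ⋯ (n-h)` of
injective paths times the number of rooted forests with `h + 1` prescribed roots, which by the
generalised Cayley formula is `(h+1) n^(n-h-2)`.

The Cayley formula `k n^(n-k-1)` for forests with `k` prescribed roots is proved by induction on
the number `m` of non-roots: removing the roots leaves a forest on the `m` non-roots whose roots
are the set `A` of vertices attached directly to the old roots, and each vertex of `A` may be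
attached to any of the `k` roots. Summing over `A` gives
`∑ C(m, j) k^j · j m^(m-j-1) = k (k+m)^(m-1)`.
-/

open Finset Function

section Iterate

variable {α β : Type*}

theorem iterate_semiconj_of_forall_lt_notMem {π : α → β} {f : α → α} {g : β → β} {s : Set α}
    (hfg : ∀ x ∉ s, π (f x) = g (π x)) {x : α} {n : ℕ} (hn : ∀ i < n, f^[i] x ∉ s) :
    g^[n] (π x) = π (f^[n] x) := by
  induction n with
  | zero => rfl
  | succ n ih =>
    rw [iterate_succ_apply', iterate_succ_apply', ih fun i hi => hn i (by omega),
      hfg _ (hn n n.lt_succ_self)]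

theorem exists_iterate_mem_and_semiconj {π : α → β} {f : α → α} {g : β → β} {s : Set α}
    (hfg : ∀ x ∉ s, π (f x) = g (π x)) {x : α} (hx : ∃ n, f^[n] x ∈ s) :
    ∃ n, f^[n] x ∈ s ∧ g^[n] (π x) = π (f^[n] x) := by
  classical
  exact ⟨Nat.find hx, Nat.find_spec hx,
    iterate_semiconj_of_forall_lt_notMem hfg fun _ => Nat.find_min hx⟩

theorem exists_iterate_mem_of_semiconj {π : α → β} {f : α → α} {g : β → β} {s : Set α}
    {t : Set β} (hfg : ∀ x ∉ s, π (f x) = g (π x)) (ht : ∀ x, π x ∉ t) {x : α}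
    (hx : ∃ n, g^[n] (π x) ∈ t) : ∃ n, f^[n] x ∈ s := by
  by_contra! hs
  obtain ⟨n, hn⟩ := hx
  exact ht _ (iterate_semiconj_of_forall_lt_notMem hfg (fun i _ => hs i) ▸ hn)

def IsHittingTime (f : α → α) (x y : α) (n : ℕ) : Prop :=
  f^[n] x = y ∧ ∀ i < n, f^[i] x ≠ y

namespace IsHittingTime

variable {f : α → α} {x y : α} {n : ℕ}

theorem unique {m : ℕ} (hm : IsHittingTime f x y m) (hn : IsHittingTime f x y n) : m = n := by
  by_contra hne
  rcases Nat.lt_or_gt_of_ne hne with h | h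
  · exact hn.2 m h hm.1
  · exact hm.2 n h hn.1

theorem injective (hn : IsHittingTime f x y n) : Injective fun i : Fin (n + 1) => f^[i] x := by
  have hlt : ∀ i j : Fin (n + 1), (i : ℕ) < j → f^[i] x ≠ f^[j] x := by
    intro i j hij heq
    apply hn.2 (n - j + i) (by omega)
    rw [iterate_add_apply, heq, ← iterate_add_apply, Nat.sub_add_cancel (Nat.lt_succ_iff.1 j.2),
      hn.1]
  intro i j hij
  rcases lt_trichotomy (i : ℕ) j with h | h | h
  · exact absurd hij (hlt i j h)
  · exact Fin.ext h
  · exact absurd hij.symm (hlt j i h)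

def path (hn : IsHittingTime f x y n) : Fin (n + 1) ↪ α :=
  ⟨fun i => f^[i] x, hn.injective⟩

end IsHittingTime

end Iterate

theorem Nat.sum_range_choose_mul_mul_pow_mul_pow (x y m : ℕ) :
    ∑ j ∈ range (m + 1), m.choose j * (j * x ^ j * y ^ (m - j)) =
      m * x * (x + y) ^ (m - 1) := by
  cases m with
  | zero => simp
  | succ M =>
    rw [sum_range_succ', add_pow, mul_sum]
    simp only [zero_mul, mul_zero, add_zero, add_tsub_cancel_right]
    refine sum_congr rfl fun i _ => ?_
    rw [show M + 1 - (i + 1) = M - i by omega, Nat.cast_id]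
    calc (M + 1).choose (i + 1) * ((i + 1) * x ^ (i + 1) * y ^ (M - i))
        = (M + 1).choose (i + 1) * (i + 1) * (x * x ^ i * y ^ (M - i)) := by ring
      _ = (M + 1) * x * (x ^ i * y ^ (M - i) * M.choose i) := by
        rw [← Nat.add_one_mul_choose_eq]; ring

/-- Parent maps of the rooted forests on `V` with root set `R`. -/
def IsForestMap {V : Type*} (R : Finset V) (g : V → V) : Prop :=
  (∀ r ∈ R, g r = r) ∧ ∀ v, ∃ n, g^[n] v ∈ R

namespace IsForestMap

theorem not_empty {V : Type*} [Nonempty V] {g : V → V} : ¬IsForestMap ∅ g := fun hg =>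
  let ⟨_, h⟩ := hg.2 (Classical.arbitrary V)
  notMem_empty _ h

theorem univ_eq_id {V : Type*} [Fintype V] {g : V → V} (hg : IsForestMap univ g) : g = id :=
  funext fun v => hg.1 v (mem_univ v)

section Decompose

variable {V : Type*} [Fintype V] [DecidableEq V] {R : Finset V}

def rootChildren (R : Finset V) (g : V → V) : Finset {v // v ∈ Rᶜ} :=
  univ.filter fun s => g s ∈ R

@[simp]
theorem mem_rootChildren {g : V → V} {s : {v // v ∈ Rᶜ}} :
    s ∈ rootChildren R g ↔ g s ∈ R := by
  simp [rootChildren]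

def deleteRoots (R : Finset V) (g : V → V) (s : {v // v ∈ Rᶜ}) : {v // v ∈ Rᶜ} :=
  if hs : g s ∈ R then s else ⟨g s, mem_compl.2 hs⟩

def graft {A : Finset {v // v ∈ Rᶜ}} (φ : A → R) (h : {v // v ∈ Rᶜ} → {v // v ∈ Rᶜ}) (v : V) :
    V :=
  if hv : v ∈ R then v else
    if ha : ⟨v, mem_compl.2 hv⟩ ∈ A then φ ⟨_, ha⟩ else h ⟨v, mem_compl.2 hv⟩

theorem deleteRoots_of_mem {g : V → V} {s : {v // v ∈ Rᶜ}} (hs : g s ∈ R) :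
    deleteRoots R g s = s :=
  dif_pos hs

theorem val_deleteRoots_of_notMem {g : V → V} {s : {v // v ∈ Rᶜ}} (hs : g s ∉ R) :
    (deleteRoots R g s : V) = g s := by
  rw [deleteRoots, dif_neg hs]

theorem deleteRoots_isForestMap {g : V → V} (hg : IsForestMap R g) :
    IsForestMap (rootChildren R g) (deleteRoots R g) := by
  refine ⟨fun s hs => deleteRoots_of_mem (mem_rootChildren.1 hs), fun s => ?_⟩
  refine exists_iterate_mem_of_semiconj (π := Subtype.val) (t := (R : Set V)) ?_
    (fun s => mem_compl.1 s.2) (hg.2 s)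
  intro s hs
  exact val_deleteRoots_of_notMem (mt mem_rootChildren.2 hs)

section Graft

variable {A : Finset {v // v ∈ Rᶜ}} {φ : A → R} {h : {v // v ∈ Rᶜ} → {v // v ∈ Rᶜ}}

theorem graft_of_mem (v : V) (hv : v ∈ R) : graft φ h v = v := dif_pos hv

theorem graft_of_mem_attached (s : {v // v ∈ Rᶜ}) (hs : s ∈ A) : graft φ h s = φ ⟨s, hs⟩ := by
  rw [graft, dif_neg (mem_compl.1 s.2), dif_pos hs]

theorem graft_of_notMem_attached (s : {v // v ∈ Rᶜ}) (hs : s ∉ A) : graft φ h s = h s := by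
  rw [graft, dif_neg (mem_compl.1 s.2), dif_neg hs]

theorem graft_mem_iff (s : {v // v ∈ Rᶜ}) : graft φ h s ∈ R ↔ s ∈ A := by
  by_cases hs : s ∈ A
  · simp only [graft_of_mem_attached s hs, hs, coe_mem]
  · simp only [graft_of_notMem_attached s hs, hs, mem_compl.1 (h s).2]

theorem rootChildren_graft : rootChildren R (graft φ h) = A := by
  ext s
  rw [mem_rootChildren, graft_mem_iff]

theorem graft_isForestMap (hh : IsForestMap A h) : IsForestMap R (graft φ h) := by
  refine ⟨graft_of_mem, fun v => ?_⟩
  by_cases hv : v ∈ R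
  · exact ⟨0, hv⟩
  obtain ⟨n, hnA, hn⟩ := exists_iterate_mem_and_semiconj (π := Subtype.val) (g := graft φ h)
    (fun s hs => (graft_of_notMem_attached s hs).symm) (hh.2 ⟨v, mem_compl.2 hv⟩)
  refine ⟨n + 1, ?_⟩
  rw [iterate_succ_apply', hn, graft_mem_iff]
  exact hnA

end Graft

noncomputable def rootChildrenEquiv (R : Finset V) (A : Finset {v // v ∈ Rᶜ}) :
    {g : {g : V → V // IsForestMap R g} // rootChildren R g.1 = A} ≃
      (A → R) × {h : {v // v ∈ Rᶜ} → {v // v ∈ Rᶜ} // IsForestMap A h} where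
  toFun := fun ⟨⟨g, hg⟩, hA⟩ =>
    (fun a => ⟨g a.1, mem_rootChildren.1 (hA ▸ a.2)⟩,
      ⟨deleteRoots R g, hA ▸ deleteRoots_isForestMap hg⟩)
  invFun p := ⟨⟨graft p.1 p.2.1, graft_isForestMap p.2.2⟩, rootChildren_graft⟩
  left_inv := by
    rintro ⟨⟨g, hg⟩, rfl⟩
    ext v
    by_cases hv : v ∈ R
    · exact (graft_of_mem v hv).trans (hg.1 v hv).symm
    set s : {v // v ∈ Rᶜ} := ⟨v, mem_compl.2 hv⟩
    by_cases hs : s ∈ rootChildren R g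
    · exact graft_of_mem_attached s hs
    · exact (graft_of_notMem_attached s hs).trans
        (val_deleteRoots_of_notMem (mt mem_rootChildren.2 hs))
  right_inv := by
    rintro ⟨φ, h, hh⟩
    ext1
    · ext a
      exact graft_of_mem_attached _ a.2
    ext1
    ext1 s
    change deleteRoots R (graft φ h) s = h s
    by_cases hs : s ∈ A
    · rw [deleteRoots_of_mem ((graft_mem_iff s).2 hs), hh.1 s hs]
    · ext1
      rw [val_deleteRoots_of_notMem ((graft_mem_iff s).not.2 hs), graft_of_notMem_attached s hs]

theorem card_eq_sum (R : Finset V) :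
    Nat.card {g : V → V // IsForestMap R g} =
      ∑ A : Finset {v // v ∈ Rᶜ}, #R ^ #A * Nat.card {h : {v // v ∈ Rᶜ} → {v // v ∈ Rᶜ} //
        IsForestMap A h} := by
  calc Nat.card {g : V → V // IsForestMap R g}
      = ∑ A, Nat.card {g : {g : V → V // IsForestMap R g} // rootChildren R g.1 = A} := by
        rw [← Nat.card_sigma, Nat.card_congr (Equiv.sigmaFiberEquiv _)]
    _ = _ := sum_congr rfl fun A _ => by
        rw [Nat.card_congr (rootChildrenEquiv R A), Nat.card_prod, Nat.card_fun]
        simp only [Nat.card_eq_fintype_card, Fintype.card_coe]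

end Decompose

end IsForestMap

/-- Stated multiplied by `card V`, which makes it hold without truncated subtraction also when
`R = univ` or `R = ∅`. -/
theorem card_isForestMap_mul_card {V : Type*} [Fintype V] [DecidableEq V] (R : Finset V) :
    Nat.card {g : V → V // IsForestMap R g} * Fintype.card V =
      #R * Fintype.card V ^ (Fintype.card V - #R) := by
  induction hm : #Rᶜ using Nat.strong_induction_on generalizing V with
  | _ m ih =>
  have hcard : Fintype.card V = #R + m := by rw [← hm, card_add_card_compl]
  rcases m.eq_zero_or_pos with rfl | hm0
  · obtain rfl : R = univ := by rwa [card_eq_zero, compl_eq_empty_iff] at hm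
    have : Unique {g : V → V // IsForestMap univ g} :=
      ⟨⟨⟨id, fun _ _ => rfl, fun v => ⟨0, mem_univ v⟩⟩⟩,
        fun g => Subtype.ext (IsForestMap.univ_eq_id g.2)⟩
    simp
  have hsub (A : Finset {v // v ∈ Rᶜ}) :
      Nat.card {h : {v // v ∈ Rᶜ} → {v // v ∈ Rᶜ} // IsForestMap A h} * m =
        #A * m ^ (m - #A) := by
    have hV : Fintype.card {v // v ∈ Rᶜ} = m := by rw [Fintype.card_coe, hm]
    rcases A.eq_empty_or_nonempty with rfl | hA
    · have : Nonempty {v // v ∈ Rᶜ} := Fintype.card_pos_iff.1 (hV ▸ hm0)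
      have : IsEmpty {h : {v // v ∈ Rᶜ} → {v // v ∈ Rᶜ} // IsForestMap ∅ h} :=
        ⟨fun h => IsForestMap.not_empty h.2⟩
      simp
    · rw [← hV]
      exact ih #Aᶜ (by rw [card_compl, hV]; have := hA.card_pos; omega) A rfl
  have hrec : Nat.card {g : V → V // IsForestMap R g} * m = m * #R * (#R + m) ^ (m - 1) := by
    rw [IsForestMap.card_eq_sum, sum_mul, sum_congr rfl fun A _ => by rw [mul_assoc, hsub A]]
    rw [← powerset_univ, sum_powerset_apply_card (fun j => #R ^ j * (j * m ^ (m - j))),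
      card_univ, Fintype.card_coe, hm, ← Nat.sum_range_choose_mul_mul_pow_mul_pow]
    exact sum_congr rfl fun j _ => by rw [smul_eq_mul]; ring
  have hN : Nat.card {g : V → V // IsForestMap R g} = #R * (#R + m) ^ (m - 1) :=
    Nat.eq_of_mul_eq_mul_right hm0 (by rw [hrec]; ring)
  rw [hN, hcard, Nat.add_sub_cancel_left, mul_assoc, ← pow_succ, Nat.sub_add_cancel hm0]

namespace SimpleGraph.IsTree

variable {V : Type*} {T : SimpleGraph V} (hT : T.IsTree) (u : V)

noncomputable def pathTo (v : V) : T.Walk v u := (hT.connected.exists_path_of_dist v u).choose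

theorem isPath_pathTo (v : V) : (hT.pathTo u v).IsPath :=
  (hT.connected.exists_path_of_dist v u).choose_spec.1

theorem length_pathTo (v : V) : (hT.pathTo u v).length = T.dist v u :=
  (hT.connected.exists_path_of_dist v u).choose_spec.2

variable {u} in
theorem eq_pathTo {v : V} {p : T.Walk v u} (hp : p.IsPath) : p = hT.pathTo u v :=
  (hT.existsUnique_path v u).unique hp (hT.isPath_pathTo u v)

noncomputable def parent (v : V) : V := (hT.pathTo u v).snd

theorem getVert_pathTo_parent (v : V) (i : ℕ) :
    (hT.pathTo u (hT.parent u v)).getVert i = (hT.pathTo u v).getVert (i + 1) := by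
  rw [← Walk.getVert_tail, hT.eq_pathTo (hT.isPath_pathTo u v).tail]
  rfl

theorem iterate_parent (v : V) (i : ℕ) : (hT.parent u)^[i] v = (hT.pathTo u v).getVert i := by
  induction i generalizing v with
  | zero => simp
  | succ i ih => rw [iterate_succ_apply, ih, getVert_pathTo_parent]

theorem parent_self : hT.parent u u = u :=
  Walk.getVert_of_length_le _ (by simp [length_pathTo])

theorem isHittingTime_parent (v : V) : IsHittingTime (hT.parent u) v u (T.dist v u) := by
  refine ⟨by rw [hT.iterate_parent, ← hT.length_pathTo, Walk.getVert_length], fun i hi h => ?_⟩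
  have h' : (hT.pathTo u v).getVert i = (hT.pathTo u v).getVert (hT.pathTo u v).length := by
    rw [← hT.iterate_parent, h, Walk.getVert_length]
  have hi' : i ≤ (hT.pathTo u v).length := by rw [length_pathTo]; omega
  have := (hT.isPath_pathTo u v).getVert_injOn hi' (le_refl (hT.pathTo u v).length) h'
  rw [length_pathTo] at this
  omega

theorem isForestMap_parent : IsForestMap {u} (hT.parent u) :=
  ⟨by simp [hT.parent_self], fun v =>
    ⟨_, mem_singleton.2 (hT.isHittingTime_parent u v).1⟩⟩

variable {u} in
theorem adj_parent {v : V} (hv : v ≠ u) : T.Adj v (hT.parent u v) :=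
  Walk.adj_snd fun h => hv h.eq

theorem parent_eq_or_parent_eq_of_adj {a b : V} (hab : T.Adj a b) :
    hT.parent u a = b ∨ hT.parent u b = a := by
  by_cases hb : b ∈ (hT.pathTo u a).support
  · exact .inl (hT.isAcyclic.eq_snd_of_adj_start (hT.isPath_pathTo u a) hab hb).symm
  · have hpath := (Walk.cons_isPath_iff hab.symm _).2 ⟨hT.isPath_pathTo u a, hb⟩
    exact .inr (by rw [parent, ← hT.eq_pathTo hpath, Walk.snd_cons])

theorem fromRel_parent : fromRel (hT.parent u · = ·) = T := by
  ext a b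
  rw [fromRel_adj]
  refine ⟨fun ⟨hne, h⟩ => ?_, fun h => ⟨h.ne, hT.parent_eq_or_parent_eq_of_adj u h⟩⟩
  have hne_root : ∀ {v}, v ≠ hT.parent u v → v ≠ u := by
    rintro v hv rfl
    exact hv (hT.parent_self v).symm
  rcases h with rfl | rfl
  · exact hT.adj_parent (hne_root hne)
  · exact (hT.adj_parent (hne_root hne.symm)).symm

end SimpleGraph.IsTree

namespace IsForestMap

open SimpleGraph

section TreeOfMap

variable {V : Type*} {u : V} {f : V → V} (hf : IsForestMap {u} f)
include hf

theorem apply_root : f u = u := hf.1 u (mem_singleton_self u)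

theorem exists_iterate_eq (v : V) : ∃ n, f^[n] v = u :=
  let ⟨n, hn⟩ := hf.2 v
  ⟨n, mem_singleton.1 hn⟩

theorem eq_root_of_apply_apply_eq {v : V} (hv : f (f v) = v) : v = u := by
  obtain ⟨n, hn⟩ := hf.exists_iterate_eq v
  have hcycle : ∀ n, f^[n] v = v ∨ f^[n] v = f v := by
    intro n
    induction n with
    | zero => exact .inl rfl
    | succ n ih =>
      rw [iterate_succ_apply']
      rcases ih with h | h <;> rw [h]
      exacts [.inr rfl, .inl hv]
  rcases hcycle n with h | h <;> rw [h] at hn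
  · exact hn
  · rw [← hv, hn, hf.apply_root]

theorem adj_fromRel {v : V} (hv : v ≠ u) : (fromRel (f · = ·)).Adj v (f v) :=
  (fromRel_adj _ _ _).2
    ⟨fun h => hv (hf.eq_root_of_apply_apply_eq (by rw [← h, ← h])), .inl rfl⟩

theorem connected_fromRel : (fromRel (f · = ·)).Connected := by
  have hreach : ∀ n v, f^[n] v = u → (fromRel (f · = ·)).Reachable v u := by
    intro n
    induction n with
    | zero => rintro v rfl; rfl
    | succ n ih =>
      intro v hv
      refine .trans ?_ (ih (f v) hv)
      by_cases hvu : v = u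
      · rw [hvu, hf.apply_root]
      · exact (hf.adj_fromRel hvu).reachable
  refine (connected_iff_exists_forall_reachable _).2 ⟨u, fun v => ?_⟩
  obtain ⟨n, hn⟩ := hf.exists_iterate_eq v
  exact (hreach n v hn).symm

theorem card_edgeSet_fromRel [Fintype V] [DecidableEq V] :
    Nat.card (fromRel (f · = ·)).edgeSet + 1 = Fintype.card V := by
  have hbij : Bijective fun v : {v // v ≠ u} =>
      (⟨s(v, f v), hf.adj_fromRel v.2⟩ : (fromRel (f · = ·)).edgeSet) := by
    refine ⟨fun v w hvw => ?_, fun ⟨e, he⟩ => ?_⟩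
    · rcases Sym2.eq_iff.1 (congrArg Subtype.val hvw) with ⟨h, -⟩ | ⟨hv, hw⟩
      · exact Subtype.ext h
      · exact absurd (hf.eq_root_of_apply_apply_eq (by rw [← hv, hw])) w.2
    induction e using Sym2.ind with
    | _ a b =>
    obtain ⟨hab, rfl | rfl⟩ := (fromRel_adj _ _ _).1 (mem_edgeSet _ |>.1 he)
    · exact ⟨⟨a, fun h => hab (by rw [h, hf.apply_root])⟩, rfl⟩
    · exact ⟨⟨b, fun h => hab (by rw [h, hf.apply_root])⟩, Subtype.ext Sym2.eq_swap⟩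
  have : Nonempty V := ⟨u⟩
  rw [← Nat.card_eq_of_bijective _ hbij, Nat.card_eq_fintype_card, Fintype.card_subtype_compl,
    Fintype.card_subtype_eq, Nat.sub_add_cancel Fintype.card_pos]

theorem isTree_fromRel [Finite V] : (fromRel (f · = ·)).IsTree := by
  have := Fintype.ofFinite V
  classical
  exact isTree_iff_connected_and_card.2 ⟨hf.connected_fromRel, by
    rw [hf.card_edgeSet_fromRel, Nat.card_eq_fintype_card]⟩

theorem parent_isTree_fromRel [Finite V] : hf.isTree_fromRel.parent u = f := by
  funext v
  obtain ⟨n, hn⟩ := hf.exists_iterate_eq v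
  induction n generalizing v with
  | zero =>
    obtain rfl : v = u := hn
    rw [IsTree.parent_self, hf.apply_root]
  | succ n ih =>
    by_cases hv : v = u
    · rw [hv, IsTree.parent_self, hf.apply_root]
    refine (hf.isTree_fromRel.parent_eq_or_parent_eq_of_adj u (hf.adj_fromRel hv)).resolve_right
      fun h => hv (hf.eq_root_of_apply_apply_eq ?_)
    rwa [← ih (f v) hn]

end TreeOfMap

theorem piecewise {V : Type*} [DecidableEq V] {S R : Finset V} {f : V → V}
    (hf : IsForestMap S f) (hSR : S ⊆ R) : IsForestMap R (R.piecewise id f) := by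
  refine ⟨fun r hr => R.piecewise_eq_of_mem _ _ hr, fun v => ?_⟩
  obtain ⟨n, hn⟩ := hf.2 v
  obtain ⟨m, hm, hfm⟩ := exists_iterate_mem_and_semiconj (π := id) (g := R.piecewise id f)
    (s := (R : Set V)) (fun w hw => (R.piecewise_eq_of_notMem _ _ hw).symm) ⟨n, hSR hn⟩
  exact ⟨m, hfm ▸ hm⟩

end IsForestMap

section PathExtend

variable {V : Type*} {h : ℕ}

/-- Moves one step along `p` towards its last vertex, which it fixes, and acts as `g` off `p`. -/
noncomputable def pathExtend (p : Fin (h + 1) ↪ V) (g : V → V) : V → V :=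
  extend p (fun i => p ⟨min (i + 1) h, by omega⟩) g

theorem iterate_pathExtend (p : Fin (h + 1) ↪ V) (g : V → V) (i : Fin (h + 1)) (j : ℕ) :
    (pathExtend p g)^[j] (p i) = p ⟨min (i + j) h, by omega⟩ := by
  induction j with
  | zero => simp [min_eq_left (Nat.lt_succ_iff.1 i.2)]
  | succ j ih =>
    rw [iterate_succ_apply', ih, pathExtend, p.injective.extend_apply]
    congr 2
    dsimp only
    omega

theorem pathExtend_of_notMem (p : Fin (h + 1) ↪ V) (g : V → V) {v : V}
    (hv : v ∉ univ.map p) : pathExtend p g v = g v :=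
  extend_apply' _ _ _ fun ⟨i, hi⟩ => hv (mem_map.2 ⟨i, mem_univ i, hi⟩)

theorem isHittingTime_pathExtend (p : Fin (h + 1) ↪ V) (g : V → V) :
    IsHittingTime (pathExtend p g) (p 0) (p (Fin.last h)) h := by
  refine ⟨?_, fun i hi heq => ?_⟩
  · rw [iterate_pathExtend]
    congr
    simp
  · rw [iterate_pathExtend] at heq
    have := congrArg Fin.val (p.injective heq)
    simp only [Fin.val_zero, zero_add, Fin.val_last] at this
    omega

theorem isForestMap_pathExtend [DecidableEq V] {p : Fin (h + 1) ↪ V} {g : V → V}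
    (hg : IsForestMap (univ.map p) g) : IsForestMap {p (Fin.last h)} (pathExtend p g) := by
  have hreach (i : Fin (h + 1)) : (pathExtend p g)^[h - i] (p i) = p (Fin.last h) := by
    rw [iterate_pathExtend]
    congr 1
    exact Fin.ext (by simp; omega)
  refine ⟨fun r hr => ?_, fun v => ?_⟩
  · rw [mem_singleton.1 hr, pathExtend, p.injective.extend_apply]
    exact congrArg p (Fin.ext (by simp))
  obtain ⟨n, hn, hgn⟩ := exists_iterate_mem_and_semiconj (π := id) (g := pathExtend p g)
    (fun w hw => (pathExtend_of_notMem p g hw).symm) (hg.2 v)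
  obtain ⟨i, -, hi⟩ := mem_map.1 hn
  refine ⟨h - i + n, mem_singleton.2 ?_⟩
  simp only [id] at hgn
  rw [iterate_add_apply, hgn, ← hi, hreach]

end PathExtend

section Bijections

open SimpleGraph

/-- Triples `(u, v, f)`: `f` is the parent map of a tree rooted at `u` and `v` has depth `h`. -/
abbrev RootedTreeMapAtDepth (V : Type*) (h : ℕ) : Type _ :=
  {x : V × V × (V → V) // IsForestMap {x.1} x.2.2 ∧ IsHittingTime x.2.2 x.2.1 x.1 h}

noncomputable def treeEquivRootedTreeMapAtDepth (V : Type*) [Finite V] {h : ℕ} (hh : 1 ≤ h) :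
    {q : SimpleGraph V × V × V // q.1.IsTree ∧ q.2.1 ≠ q.2.2 ∧ q.1.dist q.2.1 q.2.2 = h} ≃
      RootedTreeMapAtDepth V h where
  toFun := fun ⟨(_, u, v), hT, _, hd⟩ => ⟨(u, v, hT.parent u), hT.isForestMap_parent u, by
    rw [← hd, SimpleGraph.dist_comm]
    exact hT.isHittingTime_parent u v⟩
  invFun := fun ⟨(u, v, f), hf, hv⟩ => ⟨(fromRel (f · = ·), u, v), hf.isTree_fromRel,
    fun h0 => hv.2 0 hh h0.symm, by
      rw [SimpleGraph.dist_comm]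
      have := hf.isTree_fromRel.isHittingTime_parent u v
      rw [hf.parent_isTree_fromRel] at this
      exact this.unique hv⟩
  left_inv := fun ⟨(_, u, _), hT, _, _⟩ => Subtype.ext (Prod.ext (hT.fromRel_parent u) rfl)
  right_inv := fun ⟨_, hf, _⟩ => Subtype.ext (Prod.ext rfl (Prod.ext rfl hf.parent_isTree_fromRel))

noncomputable def rootedTreeMapAtDepthEquivPathForest (V : Type*) [DecidableEq V] (h : ℕ) :
    RootedTreeMapAtDepth V h ≃
      {x : (Fin (h + 1) ↪ V) × (V → V) // IsForestMap (univ.map x.1) x.2} where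
  toFun := fun ⟨(_, _, f), hf, hv⟩ => ⟨(hv.path, (univ.map hv.path).piecewise id f),
    hf.piecewise (singleton_subset_iff.2 (mem_map.2 ⟨Fin.last h, mem_univ _, hv.1⟩))⟩
  invFun := fun ⟨(p, g), hg⟩ => ⟨(p (Fin.last h), p 0, pathExtend p g),
    isForestMap_pathExtend hg, isHittingTime_pathExtend p g⟩
  left_inv := by
    rintro ⟨⟨u, v, f⟩, hf, hv⟩
    refine Subtype.ext (Prod.ext hv.1 (Prod.ext rfl (funext fun w => ?_)))
    change pathExtend hv.path ((univ.map hv.path).piecewise id f) w = f w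
    by_cases hw : w ∈ univ.map hv.path
    · obtain ⟨i, -, rfl⟩ := mem_map.1 hw
      rw [pathExtend, hv.path.injective.extend_apply]
      change f^[min (i + 1) h] v = f (f^[i] v)
      rcases Nat.lt_or_ge (i : ℕ) h with hi | hi
      · rw [min_eq_left hi, iterate_succ_apply']
      · rw [show (i : ℕ) = h by omega, min_eq_right (Nat.le_succ _), hv.1]
        exact hf.apply_root.symm
    · rw [pathExtend_of_notMem _ _ hw, piecewise_eq_of_notMem _ _ _ hw]
  right_inv := by
    rintro ⟨⟨p, g⟩, hg⟩
    have hp : (isHittingTime_pathExtend p g).path = p := by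
      ext i
      simp [IsHittingTime.path, iterate_pathExtend, min_eq_left (Nat.lt_succ_iff.1 i.2)]
    refine Subtype.ext (Prod.ext hp (funext fun w => ?_))
    change (univ.map (isHittingTime_pathExtend p g).path).piecewise id (pathExtend p g) w = g w
    rw [hp]
    by_cases hw : w ∈ univ.map p
    · exact (piecewise_eq_of_mem _ _ _ hw).trans (hg.1 w hw).symm
    · rw [piecewise_eq_of_notMem _ _ _ hw, pathExtend_of_notMem _ _ hw]

end Bijections

theorem card_pathForest_mul_card {V : Type*} [Fintype V] [DecidableEq V] (h : ℕ) :
    Nat.card {x : (Fin (h + 1) ↪ V) × (V → V) // IsForestMap (univ.map x.1) x.2} *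
        Fintype.card V =
      (Fintype.card V).descFactorial (h + 1) *
        ((h + 1) * Fintype.card V ^ (Fintype.card V - (h + 1))) := by
  rw [Nat.card_congr (Equiv.subtypeProdEquivSigmaSubtype fun p g => IsForestMap (univ.map p) g),
    Nat.card_sigma, sum_mul]
  simp_rw [card_isForestMap_mul_card, card_map, card_univ, Fintype.card_fin]
  rw [sum_const, card_univ, Fintype.card_embedding_eq, Fintype.card_fin, smul_eq_mul]

theorem card_isTree_dist_eq_mul_card {V : Type*} [Fintype V] [DecidableEq V] {h : ℕ}
    (hh : 1 ≤ h) :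
    Nat.card {q : SimpleGraph V × V × V //
        q.1.IsTree ∧ q.2.1 ≠ q.2.2 ∧ q.1.dist q.2.1 q.2.2 = h} * Fintype.card V =
      (Fintype.card V).descFactorial (h + 1) *
        ((h + 1) * Fintype.card V ^ (Fintype.card V - (h + 1))) := by
  rw [Nat.card_congr ((treeEquivRootedTreeMapAtDepth V hh).trans
    (rootedTreeMapAtDepthEquivPathForest V h)), card_pathForest_mul_card]

theorem stmt19_general (n h : ℕ) (hh1 : 1 ≤ h) :
    (Nat.card {q : SimpleGraph (Fin n) × Fin n × Fin n //
        q.1.IsTree ∧ q.2.1 ≠ q.2.2 ∧ q.1.dist q.2.1 q.2.2 = h} : ℚ) /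
        ((n : ℚ) ^ (n - 2) * ((n : ℚ) * ((n : ℚ) - 1))) =
      (((h : ℚ) + 1) / ((n : ℚ) - 1)) *
        (∏ j ∈ Finset.range (h + 1), ((n : ℚ) - j)) / (n : ℚ) ^ (h + 1) := by
  have hcount := card_isTree_dist_eq_mul_card (V := Fin n) hh1
  rw [Fintype.card_fin] at hcount
  rw [← descPochhammer_eval_eq_prod_range, descPochhammer_eval_eq_descFactorial]
  rcases Nat.lt_or_ge n (h + 1) with hn | hn
  · rw [Nat.descFactorial_eq_zero_iff_lt.2 hn, zero_mul, mul_eq_zero] at hcount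
    rw [Nat.descFactorial_eq_zero_iff_lt.2 hn]
    rcases hcount with hC | rfl <;> simp [*]
  have hn0 : (n : ℚ) ≠ 0 := by norm_cast; omega
  have hn1 : (n : ℚ) - 1 ≠ 0 := by rw [sub_ne_zero]; norm_cast; omega
  have hpow : (n : ℚ) ^ (n - 2) * n = n ^ (n - (h + 1)) * n ^ h := by
    rw [← pow_succ, ← pow_add]; congr 1; omega
  have hC := congrArg (Nat.cast : ℕ → ℚ) hcount
  push_cast at hC
  rw [div_eq_iff (by positivity)]
  field_simp
  linear_combination (n : ℚ) ^ h * hC - ((h : ℚ) + 1) * (n.descFactorial (h + 1) : ℚ) * hpow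

/-- Moon's formula: in a uniform labeled tree on `n` vertices, the distance between
two uniformly chosen distinct vertices equals `h` with probability
`((h+1)/(n-1)) · n(n-1)⋯(n-h)/n^(h+1)`, for `1 ≤ h ≤ n-1`.  The probability is the
number of triples (tree, ordered pair of distinct vertices at distance `h`) divided
by `n^(n-2) · n(n-1)`. -/
theorem stmt19 (n h : ℕ) (hh1 : 1 ≤ h) (hh2 : h ≤ n - 1) :
    (Nat.card {q : SimpleGraph (Fin n) × Fin n × Fin n //
        q.1.IsTree ∧ q.2.1 ≠ q.2.2 ∧ q.1.dist q.2.1 q.2.2 = h} : ℚ) /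
        ((n : ℚ) ^ (n - 2) * ((n : ℚ) * ((n : ℚ) - 1))) =
      (((h : ℚ) + 1) / ((n : ℚ) - 1)) *
        (∏ j ∈ Finset.range (h + 1), ((n : ℚ) - j)) / (n : ℚ) ^ (h + 1) :=
  stmt19_general n h hh1
end
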